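/- arXiv:1703.07142 — 6 statements merged into one kernel-verified Lean document; each statement's English description precedes it below -/
import Mathlib

section
/- For any topological space $X$, the evaluation map $\pi: PX \to X \times X$, $\pi(\gamma) = (\gamma(0), \gamma(1))$, is a $\mathbb{Z}/2$-fibration, where $\mathbb{Z}/2$ acts on $PX$ by path reversal $\gamma \mapsto \bar\gamma$ (with $\bar\gamma(t) = \gamma(1-t)$) and on $X \times X$ by transposition of factors. -/
open unitInterval Set

noncomputable section

/-- The space of paths in `X`: continuous maps from the unit interval. -/
abbrev PathSp (X : Type*) [TopologicalSpace X] := C(I, X)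

/-- Path reversal, the `ℤ/2`-action on the path space. -/
def pathRev {X : Type*} [TopologicalSpace X] (γ : PathSp X) : PathSp X :=
  γ.comp ⟨unitInterval.symm, unitInterval.continuous_symm⟩

/-- The evaluation map `π : PX → X × X`, `γ ↦ (γ 0, γ 1)`. -/
def evalMap (X : Type*) [TopologicalSpace X] : PathSp X → X × X :=
  fun γ => (γ 0, γ 1)

/-- `σ` is a local section of the evaluation map on `U ⊆ X × X` which is equivariant
with respect to transposition and path reversal. -/
def IsSymSection {X : Type*} [TopologicalSpace X] (U : Set (X × X))
    (sec : C(U, PathSp X)) : Prop :=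
  (∀ u : U, sec u 0 = (u : X × X).1 ∧ sec u 1 = (u : X × X).2) ∧
  (∀ (u : U) (hs : Prod.swap (u : X × X) ∈ U) (t : I),
      sec ⟨Prod.swap (u : X × X), hs⟩ t = sec u (unitInterval.symm t))

/-- `TCΣ(X) ≤ k` : there is a cover of `X × X` by `k+1` invariant open sets,
each admitting an equivariant local section of the evaluation map. -/
def TCSigma_le (X : Type*) [TopologicalSpace X] (k : ℕ) : Prop :=
  ∃ U : Fin (k + 1) → Set (X × X),
    (∀ i, IsOpen (U i)) ∧
    (∀ i, ∀ p ∈ U i, Prod.swap p ∈ U i) ∧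
    (⋃ i, U i) = Set.univ ∧
    (∀ i, ∃ sec : C(U i, PathSp X), IsSymSection (U i) sec)

/-- The symmetrized topological complexity, as an extended natural number. -/
def TCSigma (X : Type*) [TopologicalSpace X] : ℕ∞ :=
  sInf {n : ℕ∞ | ∃ k : ℕ, n = k ∧ TCSigma_le X k}

/-- `TC^{M,Σ}(X) ≤ k`: as for `TCΣ` but each set of the cover contains the diagonal and the
sections are constant on the diagonal. -/
def TCMSigma_le (X : Type*) [TopologicalSpace X] (k : ℕ) : Prop :=
  ∃ U : Fin (k + 1) → Set (X × X),
    (∀ i, IsOpen (U i)) ∧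
    (∀ i, ∀ p ∈ U i, Prod.swap p ∈ U i) ∧
    (∀ i (x : X), (x, x) ∈ U i) ∧
    (⋃ i, U i) = Set.univ ∧
    (∀ i, ∃ sec : C(U i, PathSp X), IsSymSection (U i) sec ∧
      ∀ (x : X) (h : (x, x) ∈ U i) (t : I), sec ⟨(x, x), h⟩ t = x)

/-- The monoidal symmetrized topological complexity, as an extended natural number. -/
def TCMSigma (X : Type*) [TopologicalSpace X] : ℕ∞ :=
  sInf {n : ℕ∞ | ∃ k : ℕ, n = k ∧ TCMSigma_le X k}
universe u

/-- A map `p : E → B` of `ℤ/2`-spaces (actions given by involutions) is a `ℤ/2`-fibration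
if it has the equivariant homotopy lifting property with respect to all spaces with
involution. -/
def IsEquivFibration {E B : Type u} [TopologicalSpace E] [TopologicalSpace B]
    (tauE : C(E, E)) (tauB : C(B, B)) (p : C(E, B)) : Prop :=
  ∀ (Y : Type u) [TopologicalSpace Y] (nu : C(Y, Y)), (∀ y, nu (nu y) = y) →
    ∀ (f : C(Y, E)) (H : C(Y × I, B)),
      (∀ y, f (nu y) = tauE (f y)) →
      (∀ (y : Y) (t : I), H (nu y, t) = tauB (H (y, t))) →
      (∀ y, H (y, 0) = p (f y)) →
      ∃ F : C(Y × I, E),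
        (∀ y, F (y, 0) = f y) ∧
        (∀ (y : Y) (t : I), p (F (y, t)) = H (y, t)) ∧
        (∀ (y : Y) (t : I), F (nu y, t) = tauE (F (y, t)))

/-- Path reversal as a continuous self-map of the path space. -/
def pathRevCM (X : Type u) [TopologicalSpace X] : C(PathSp X, PathSp X) :=
  ⟨pathRev, by
    apply ContinuousMap.continuous_precomp⟩

/-- Transposition of coordinates as a continuous self-map of `X × X`. -/
def swapCM (X : Type u) [TopologicalSpace X] : C(X × X, X × X) :=
  ⟨Prod.swap, continuous_swap⟩

/-- The evaluation map as a continuous map. -/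
def evalCM (X : Type u) [TopologicalSpace X] : C(PathSp X, X × X) :=
  ⟨evalMap X, by
    apply Continuous.prodMk <;> exact continuous_eval_const _⟩

/-!
A lift of `H : Y × I → X × X` starting at `f : Y → PX` is obtained by prolonging each path
`f y` to the whole real line, backwards along the first coordinate of `H (y, ·)` and forwards
along its second coordinate, and then letting `F (y, t)` be the restriction of this prolonged
path to `[-t, 1 + t]`, reparametrised affinely by `I`. Both the prolongation and the affine
reparametrisation commute with the flip `r ↦ 1 - r`, which makes the lift equivariant.
-/

section HomotopyLift

variable {X Y : Type*} [TopologicalSpace X] [TopologicalSpace Y]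
  {f : C(Y, PathSp X)} {H : C(Y × I, X × X)}

def extendedPath (f : C(Y, PathSp X)) (H : C(Y × I, X × X)) (y : Y) (r : ℝ) : X :=
  if r ≤ 0 then (H (y, projIcc 0 1 zero_le_one (-r))).1
  else if r ≤ 1 then f y (projIcc 0 1 zero_le_one r)
  else (H (y, projIcc 0 1 zero_le_one (r - 1))).2

lemma extendedPath_coe (h0 : ∀ y, H (y, 0) = evalMap X (f y)) (y : Y) (s : I) :
    extendedPath f H y s = f y s := by
  rcases eq_or_ne s 0 with rfl | hs
  · simp [extendedPath, h0, evalMap]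
  · have hpos : (0 : ℝ) < s := unitInterval.pos_iff_ne_zero.mpr hs
    simp [extendedPath, hpos.not_ge, s.2.2]

lemma extendedPath_neg (y : Y) (t : I) : extendedPath f H y (-t) = (H (y, t)).1 := by
  simp [extendedPath, t.2.1]

lemma extendedPath_one_add (h0 : ∀ y, H (y, 0) = evalMap X (f y)) (y : Y) (t : I) :
    extendedPath f H y (1 + t) = (H (y, t)).2 := by
  rcases eq_or_ne t 0 with rfl | ht
  · simp [extendedPath, h0, evalMap]
  · have hpos : (0 : ℝ) < t := unitInterval.pos_iff_ne_zero.mpr ht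
    simp [extendedPath, hpos.not_ge, (by linarith : ¬ (1 : ℝ) + t ≤ 0)]

lemma continuous_extendedPath (h0 : ∀ y, H (y, 0) = evalMap X (f y)) :
    Continuous fun p : Y × ℝ => extendedPath f H p.1 p.2 := by
  have hproj : Continuous (projIcc (0 : ℝ) 1 zero_le_one) := continuous_projIcc
  refine Continuous.if_le (by fun_prop) (Continuous.if_le ?_ ?_ ?_ ?_ ?_) ?_ ?_ ?_
  all_goals try fun_prop
  · rintro ⟨y, r⟩ (rfl : r = 1)
    simp [h0, evalMap]
  · rintro ⟨y, r⟩ (rfl : r = 0)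
    simp [h0, evalMap]

lemma extendedPath_symm (h0 : ∀ y, H (y, 0) = evalMap X (f y)) {ν : C(Y, Y)}
    (hf : ∀ y, f (ν y) = pathRev (f y)) (hH : ∀ y t, H (ν y, t) = (H (y, t)).swap)
    (y : Y) (r : ℝ) : extendedPath f H (ν y) r = extendedPath f H y (1 - r) := by
  have hrev : ∀ s, f (ν y) (projIcc 0 1 zero_le_one s) = f y (projIcc 0 1 zero_le_one (1 - s)) :=
    fun s => by rw [hf, ← symm_projIcc]; rfl
  simp only [extendedPath, hH, hrev, Prod.fst_swap, Prod.snd_swap, sub_sub_cancel_left, neg_sub]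
  -- at the seams `r = 0` and `r = 1` the two sides are given by different clauses
  rcases eq_or_ne r 0 with rfl | hr₀
  · simp [h0, evalMap]
  rcases eq_or_ne r 1 with rfl | hr₁
  · simp [h0, evalMap]
  split_ifs <;> first
    | rfl
    | (exfalso; linarith)
    | (exfalso; apply hr₀; linarith)
    | (exfalso; apply hr₁; linarith)

def homotopyLift (h0 : ∀ y, H (y, 0) = evalMap X (f y)) : C(Y × I, PathSp X) :=
  ContinuousMap.curry
    ⟨fun p => extendedPath f H p.1.1 ((1 + 2 * p.1.2) * p.2 - p.1.2),
      (continuous_extendedPath h0).comp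
        (f := fun p : (Y × I) × I => (p.1.1, (1 + 2 * (p.1.2 : ℝ)) * p.2 - p.1.2))
        (by fun_prop)⟩

variable (h0 : ∀ y, H (y, 0) = evalMap X (f y))

lemma homotopyLift_apply (y : Y) (t s : I) :
    homotopyLift h0 (y, t) s = extendedPath f H y ((1 + 2 * t) * s - t) :=
  rfl

lemma homotopyLift_zero (y : Y) : homotopyLift h0 (y, 0) = f y := by
  ext s
  rw [homotopyLift_apply, ← extendedPath_coe h0]
  simp

lemma evalMap_homotopyLift (y : Y) (t : I) : evalMap X (homotopyLift h0 (y, t)) = H (y, t) := by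
  have h₀ : (1 + 2 * (t : ℝ)) * (0 : I) - t = -t := by simp
  have h₁ : (1 + 2 * (t : ℝ)) * (1 : I) - t = 1 + t := by push_cast; ring
  simp only [evalMap, homotopyLift_apply, h₀, h₁, extendedPath_neg, extendedPath_one_add h0]

lemma homotopyLift_symm {ν : C(Y, Y)} (hf : ∀ y, f (ν y) = pathRev (f y))
    (hH : ∀ y t, H (ν y, t) = (H (y, t)).swap) (y : Y) (t : I) :
    homotopyLift h0 (ν y, t) = pathRev (homotopyLift h0 (y, t)) := by
  ext s
  rw [homotopyLift_apply, extendedPath_symm h0 hf hH]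
  change _ = extendedPath f H y ((1 + 2 * t) * (1 - s : ℝ) - t)
  ring_nf

end HomotopyLift

/-- For any space `X` the evaluation map `π : PX → X × X` is a
`ℤ/2`-fibration, for the path-reversal and transposition involutions. -/
theorem evalMap_isEquivFibration (X : Type u) [TopologicalSpace X] :
    IsEquivFibration (pathRevCM X) (swapCM X) (evalCM X) :=
  fun _ _ _ _ _ _ hf hH h0 =>
    ⟨homotopyLift h0, homotopyLift_zero h0, evalMap_homotopyLift h0, homotopyLift_symm h0 hf hH⟩
end
end

section
/- Let $X$ be a Euclidean neighbourhood retract (ENR). Then the diagonal inclusion $\Delta: X \hookrightarrow X \times X$, $x \mapsto (x,x)$, is a $\mathbb{Z}/2$-cofibration, where $\mathbb{Z}/2$ acts trivially on $X$ and by transposition of factors on $X \times X$. -/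
open unitInterval Set

noncomputable section

universe u

/-- An inclusion `A ⊆ X` of `ℤ/2`-spaces (the action given by an involution `τ` on `X`
preserving `A`) is an equivariant cofibration if it has the equivariant homotopy
extension property with respect to all spaces with involution. -/
def IsEquivCofibration {X : Type u} [TopologicalSpace X] (tau : C(X, X))
    (A : Set X) : Prop :=
  ∀ (Y : Type u) [TopologicalSpace Y] (nu : C(Y, Y)), (∀ y, nu (nu y) = y) →
    ∀ (f : C(X, Y)) (H : C(A × I, Y)),
      (∀ x, f (tau x) = nu (f x)) →
      (∀ (a : A) (ha : tau a ∈ A) (t : I), H (⟨tau a, ha⟩, t) = nu (H (a, t))) →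
      (∀ a : A, H (a, 0) = f a) →
      ∃ F : C(X × I, Y),
        (∀ x, F (x, 0) = f x) ∧
        (∀ (a : A) (t : I), F ((a : X), t) = H (a, t)) ∧
        (∀ (x : X) (t : I), F (tau x, t) = nu (F (x, t)))
/-- A space is a Euclidean neighbourhood retract (ENR) if it embeds into some `ℝⁿ`
as a retract of an open subset. -/
def IsENR (X : Type*) [TopologicalSpace X] : Prop :=
  ∃ (n : ℕ) (e : X → EuclideanSpace ℝ (Fin n)) (U : Set (EuclideanSpace ℝ (Fin n))),
    Topology.IsEmbedding e ∧ IsOpen U ∧ Set.range e ⊆ U ∧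
    ∃ r : U → X, Continuous r ∧ ∀ (x : X) (h : e x ∈ U), r ⟨e x, h⟩ = x

/-!
Embed `X` in `ℝⁿ` as a retract `r : U → X` of an open set `U`. A pair `(x, y)` whose segment
`[e x, e y]` lies in `U` can be moved along it, both ends at once, to its midpoint, and `r` brings
the two moving points back to `X`; as the two ends play symmetric roles, this deformation commutes
with the transposition. Cut off by a symmetric Urysohn function vanishing exactly on `ΔX` and equal
to `1` off the set of such pairs, it makes `(X × X, ΔX)` an equivariant NDR pair. Strøm's formula
turns NDR data into an equivariant retraction of `(X × X) × I` onto `X × X × {0} ∪ ΔX × I`, and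
precomposing the glued map `f ∪ H` with it solves every equivariant extension problem.
-/

open AffineMap

section Tube

variable {Z K Y : Type*} [TopologicalSpace Z] [TopologicalSpace K] [TopologicalSpace Y]

theorem isOpen_setOf_forall_mem_of_compactSpace [CompactSpace K] (g : C(Z × K, Y)) {O : Set Y}
    (hO : IsOpen O) : IsOpen {z | ∀ k, g (z, k) ∈ O} := by
  simpa [MapsTo] using
    (ContinuousMap.isOpen_setOfPred_mapsTo isCompact_univ hO).preimage g.curry.continuous

theorem continuous_homotopy_comp_projIcc_div (D : C(Z × I, Y)) {u : Z → ℝ} (hu : Continuous u)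
    (hD : ∀ z, u z = 0 → ∀ s, D (z, s) = D (z, 0)) :
    Continuous fun q : Z × I => D (q.1, projIcc 0 1 zero_le_one (q.2 / u q.1)) := by
  refine continuous_iff_continuousAt.2 fun ⟨z, t⟩ => ?_
  by_cases hz : u z = 0
  · -- `D` is constant on `{z} × I`, so by the tube lemma it is uniformly close to `D (z, 0)` near `z`
    refine (nhds_basis_opens _).tendsto_right_iff.2 fun O ⟨hzO, hO⟩ => ?_
    have hmem : z ∈ {z' | ∀ s, D (z', s) ∈ O} := fun s => by
      simpa [hz, hD z hz s] using hzO
    filter_upwards [continuous_fst.continuousAt.preimage_mem_nhds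
      ((isOpen_setOf_forall_mem_of_compactSpace D hO).mem_nhds hmem)] with q hq
    exact hq _
  · have : ContinuousAt (fun q : Z × I => (q.2 : ℝ) / u q.1) (z, t) :=
      (continuous_subtype_val.comp continuous_snd).continuousAt.div
        (hu.comp continuous_fst).continuousAt hz
    exact D.continuous.continuousAt.comp
      (continuousAt_fst.prodMk (continuous_projIcc.continuousAt.comp this))

end Tube

theorem IsEquivCofibration.of_retraction {Z : Type u} [TopologicalSpace Z] {τ : C(Z, Z)}
    {A : Set Z} (hA : IsClosed A) (r : C(Z × I, Z × I)) (hr_mem : ∀ q, (r q).2 = 0 ∨ (r q).1 ∈ A)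
    (hr_zero : ∀ z, r (z, 0) = (z, 0)) (hr_of_mem : ∀ a ∈ A, ∀ t, r (a, t) = (a, t))
    (hr_comp : ∀ z t, r (τ z, t) = (τ (r (z, t)).1, (r (z, t)).2)) :
    IsEquivCofibration τ A := by
  classical
  intro Y _ ν _ f H hf hH hH0
  let G : Z × I → Y := fun q => if h : q.1 ∈ A then H (⟨q.1, h⟩, q.2) else f q.1
  have hG_zero (z : Z) : G (z, 0) = f z := by
    by_cases h : z ∈ A
    · simpa [G, h] using hH0 ⟨z, h⟩
    · simp [G, h]
  have hG_of_mem (a : A) (t : I) : G (a, t) = H (a, t) := dif_pos a.2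
  have hG : ContinuousOn G (univ ×ˢ {0} ∪ A ×ˢ univ) := by
    refine .union_of_isClosed ?_ ?_ (isClosed_univ.prod isClosed_singleton) (hA.prod isClosed_univ)
    · refine (f.continuous.comp continuous_fst).continuousOn.congr fun q hq => ?_
      obtain ⟨z, t⟩ := q
      obtain rfl : t = 0 := hq.2
      exact hG_zero z
    · rw [continuousOn_iff_continuous_domRestrict]
      convert H.continuous.comp (show Continuous fun q : ↥(A ×ˢ (univ : Set I)) =>
        ((⟨q.1.1, q.2.1⟩ : A), q.1.2) by fun_prop) using 1
      funext q
      exact dif_pos q.2.1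
  have hG_comp (w : Z) (s : I) (hw : s = 0 ∨ w ∈ A) (hτw : s = 0 ∨ τ w ∈ A) :
      G (τ w, s) = ν (G (w, s)) := by
    rcases eq_or_ne s 0 with rfl | hs
    · rw [hG_zero, hG_zero, hf]
    · rw [hG_of_mem ⟨w, hw.resolve_left hs⟩, ← hH ⟨w, hw.resolve_left hs⟩ (hτw.resolve_left hs)]
      exact hG_of_mem ⟨τ w, _⟩ s
  refine ⟨⟨G ∘ r, hG.comp_continuous r.continuous fun q => ?_⟩, fun z => ?_, fun a t => ?_,
    fun z t => ?_⟩
  · rcases hr_mem q with h | h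
    · exact .inl ⟨mem_univ _, h⟩
    · exact .inr ⟨h, mem_univ _⟩
  · simp [hr_zero, hG_zero]
  · simp [hr_of_mem a a.2, hG_of_mem]
  · have h := hr_mem (τ z, t)
    rw [hr_comp] at h
    simpa [hr_comp] using hG_comp _ _ (hr_mem (z, t)) h

/-- NDR data for `A ⊆ Z` in the sense of Steenrod, compatible with the map `τ`. -/
structure EquivNDRPair {Z : Type*} [TopologicalSpace Z] (τ : C(Z, Z)) (A : Set Z) where
  u : C(Z, ℝ)
  deform : C(Z × I, Z)
  u_nonneg : ∀ z, 0 ≤ u z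
  u_eq_zero_iff : ∀ z, u z = 0 ↔ z ∈ A
  deform_zero : ∀ z, deform (z, 0) = z
  deform_of_mem : ∀ a ∈ A, ∀ t, deform (a, t) = a
  deform_one_mem : ∀ z, u z < 1 → deform (z, 1) ∈ A
  u_comp : ∀ z, u (τ z) = u z
  deform_comp : ∀ z t, deform (τ z, t) = τ (deform (z, t))

namespace EquivNDRPair

variable {Z : Type*} [TopologicalSpace Z] {τ : C(Z, Z)} {A : Set Z} (P : EquivNDRPair τ A)

theorem isClosed (P : EquivNDRPair τ A) : IsClosed A := by
  convert isClosed_singleton.preimage P.u.continuous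
  ext z
  exact (P.u_eq_zero_iff z).symm

/-- Strøm's retraction of `Z × I` onto `Z × {0} ∪ A × I`. On `A = u⁻¹ {0}` the quotient `t / u z`
is the junk value `0`, harmless since `deform` is stationary there. -/
def retraction : C(Z × I, Z × I) where
  toFun q := (P.deform (q.1, projIcc 0 1 zero_le_one (q.2 / P.u q.1)),
    projIcc 0 1 zero_le_one (q.2 - P.u q.1))
  continuous_toFun := by
    refine .prodMk (continuous_homotopy_comp_projIcc_div P.deform P.u.continuous fun z hz s => ?_)
      (by fun_prop)
    have hz := (P.u_eq_zero_iff z).1 hz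
    rw [P.deform_of_mem z hz, P.deform_of_mem z hz]

theorem retraction_mem (q : Z × I) : (P.retraction q).2 = 0 ∨ (P.retraction q).1 ∈ A := by
  obtain ⟨z, t⟩ := q
  rcases le_or_gt (t : ℝ) (P.u z) with ht | ht
  · exact .inl (projIcc_of_le_left zero_le_one (sub_nonpos.2 ht))
  right
  have hu1 : P.u z < 1 := ht.trans_le t.2.2
  rcases (P.u_nonneg z).eq_or_lt with hu0 | hu0
  · have hz := (P.u_eq_zero_iff z).1 hu0.symm
    simpa [retraction, P.deform_of_mem z hz] using hz
  · have : projIcc 0 1 zero_le_one (t / P.u z) = 1 :=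
      projIcc_of_right_le _ ((one_le_div hu0).2 ht.le)
    simpa [retraction, this] using P.deform_one_mem z hu1

theorem retraction_zero (z : Z) : P.retraction (z, 0) = (z, 0) := by
  simp [retraction, P.deform_zero, projIcc_of_le_left, P.u_nonneg z]

theorem retraction_of_mem {a : Z} (ha : a ∈ A) (t : I) : P.retraction (a, t) = (a, t) := by
  simp [retraction, (P.u_eq_zero_iff a).2 ha, P.deform_zero]

theorem retraction_comp (z : Z) (t : I) :
    P.retraction (τ z, t) = (τ (P.retraction (z, t)).1, (P.retraction (z, t)).2) := by
  simp [retraction, P.u_comp, P.deform_comp]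

end EquivNDRPair

theorem EquivNDRPair.isEquivCofibration {Z : Type u} [TopologicalSpace Z] {τ : C(Z, Z)}
    {A : Set Z} (P : EquivNDRPair τ A) : IsEquivCofibration τ A :=
  .of_retraction P.isClosed P.retraction P.retraction_mem P.retraction_zero
    (fun _ ha => P.retraction_of_mem ha) P.retraction_comp

theorem exists_continuous_zero_iff_one_of_isClosed {Z : Type*} [TopologicalSpace Z]
    [PerfectlyNormalSpace Z] {A B : Set Z} (hA : IsClosed A) (hB : IsClosed B)
    (hAB : Disjoint A B) :
    ∃ f : C(Z, ℝ), (∀ z, f z = 0 ↔ z ∈ A) ∧ EqOn f 1 B ∧ ∀ z, f z ∈ Icc 0 1 := by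
  obtain ⟨g, hgA, hgI⟩ := perfectlyNormalSpace_iff_forall_isClosed_preimage_zero.1 ‹_› A hA
  obtain ⟨h, hhA, hhB, hhI⟩ := exists_continuous_zero_one_of_isClosed hA hB hAB
  refine ⟨g ⊔ h, fun z => ?_, fun z hz => ?_, fun z => ?_⟩
  · rw [hgA]
    constructor
    · intro hz
      exact le_antisymm (hz ▸ le_sup_left) (hgI z).1
    · intro hz
      simpa [show h z = 0 from hhA (hgA ▸ hz)] using hz.le
  · simpa [hhB hz] using (hgI z).2
  · exact ⟨(hgI z).1.trans le_sup_left, sup_le (hgI z).2 (hhI z).2⟩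

theorem exists_continuous_invariant_zero_iff_one_of_isClosed {Z : Type*} [TopologicalSpace Z]
    [PerfectlyNormalSpace Z] {A B : Set Z} (hA : IsClosed A) (hB : IsClosed B)
    (hAB : Disjoint A B) (τ : C(Z, Z)) (hτ : Function.Involutive τ) (hτA : MapsTo τ A A) :
    ∃ f : C(Z, ℝ), (∀ z, f z = 0 ↔ z ∈ A) ∧ EqOn f 1 B ∧ (∀ z, f z ∈ Icc 0 1) ∧
      ∀ z, f (τ z) = f z := by
  obtain ⟨f, hfA, hfB, hfI⟩ := exists_continuous_zero_iff_one_of_isClosed hA hB hAB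
  refine ⟨f ⊔ f.comp τ, fun z => ?_, fun z hz => ?_, fun z => ?_, fun z => ?_⟩
  · constructor
    · intro hz
      exact (hfA z).1 (le_antisymm (hz ▸ le_sup_left) (hfI z).1)
    · intro hz
      simp [(hfA z).2 hz, (hfA _).2 (hτA hz)]
  · simpa [hfB hz] using (hfI (τ z)).2
  · exact ⟨(hfI z).1.trans le_sup_left, sup_le (hfI z).2 (hfI (τ z)).2⟩
  · simp [hτ z, sup_comm]

section SegmentNbhd

variable {X E : Type*} [AddCommGroup E] [Module ℝ E]

def segmentNbhd (e : X → E) (U : Set E) : Set (X × X) :=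
  {p | ∀ s : I, lineMap (e p.1) (e p.2) (s : ℝ) ∈ U}

variable {e : X → E} {U : Set E}

theorem isOpen_segmentNbhd [TopologicalSpace X] [TopologicalSpace E] [IsTopologicalAddGroup E]
    [ContinuousSMul ℝ E] (he : Continuous e) (hU : IsOpen U) : IsOpen (segmentNbhd e U) :=
  isOpen_setOf_forall_mem_of_compactSpace
    ⟨fun q : (X × X) × I => lineMap (e q.1.1) (e q.1.2) (q.2 : ℝ), by fun_prop⟩ hU

theorem mk_mem_segmentNbhd (heU : range e ⊆ U) (x : X) : (x, x) ∈ segmentNbhd e U :=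
  fun s => by simpa [lineMap_same_apply] using heU (mem_range_self x)

end SegmentNbhd

theorem nonempty_equivNDRPair_diagonal_of_retract {X E : Type*} [TopologicalSpace X]
    [TopologicalSpace.MetrizableSpace X] [AddCommGroup E] [Module ℝ E] [TopologicalSpace E]
    [IsTopologicalAddGroup E] [ContinuousSMul ℝ E] {e : X → E} {U : Set E} (he : Continuous e)
    (hU : IsOpen U) (heU : range e ⊆ U) {r : U → X} (hr : Continuous r)
    (hre : ∀ x (h : e x ∈ U), r ⟨e x, h⟩ = x) :
    Nonempty (EquivNDRPair (⟨Prod.swap, continuous_swap⟩ : C(X × X, X × X)) {p | p.1 = p.2}) := by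
  obtain ⟨ρ, hρ0, hρ1, hρI, hρswap⟩ := exists_continuous_invariant_zero_iff_one_of_isClosed
    isClosed_diagonal (isOpen_segmentNbhd he hU).isClosed_compl
    (disjoint_left.2 <| by rintro ⟨x, y⟩ (rfl : x = y) hpV; exact hpV (mk_mem_segmentNbhd heU x))
    ⟨Prod.swap, continuous_swap⟩ Prod.swap_swap fun p (hp : p.1 = p.2) => hp.symm
  -- at time `s` both ends have moved the fraction `s * κ p ≤ 1 / 2` of the way along the segment
  let κ : C(X × X, ℝ) := ⟨fun p => min (1 / 2) (1 - ρ p), by fun_prop⟩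
  have hκswap (p : X × X) : κ p.swap = κ p := by simp [κ, ← hρswap p]
  have hκ_nonneg (p : X × X) : 0 ≤ κ p := le_min (by norm_num) (by linarith [(hρI p).2])
  have hκ_le (p : X × X) : κ p ≤ 1 / 2 := min_le_left _ _
  have hmem (p : X × X) (s : I) : lineMap (e p.1) (e p.2) (s * κ p) ∈ U := by
    by_cases hp : p ∈ segmentNbhd e U
    · exact hp ⟨s * κ p, mul_nonneg s.2.1 (hκ_nonneg p),
        mul_le_one₀ s.2.2 (hκ_nonneg p) ((hκ_le p).trans (by norm_num))⟩
    · have : κ p = 0 := by simp [κ, hρ1 hp]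
      simpa [this] using heU (mem_range_self p.1)
  have hmem' (p : X × X) (s : I) : lineMap (e p.2) (e p.1) (s * κ p) ∈ U :=
    hκswap p ▸ hmem p.swap s
  let D : C((X × X) × I, X × X) :=
    ⟨fun q => (r ⟨_, hmem q.1 q.2⟩, r ⟨_, hmem' q.1 q.2⟩),
      (hr.comp (.subtype_mk (by fun_prop) _)).prodMk (hr.comp (.subtype_mk (by fun_prop) _))⟩
  have hκ_half {p : X × X} (hp : 2 * ρ p < 1) : κ p = 1 / 2 := min_eq_left (by linarith)
  exact ⟨{
    u := ⟨fun p => 2 * ρ p, by fun_prop⟩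
    deform := D
    u_nonneg := fun p => by simpa using (hρI p).1
    u_eq_zero_iff := fun p => by simpa using hρ0 p
    deform_zero := fun p => by simp [D, hre]
    deform_of_mem := by
      rintro ⟨x, y⟩ (rfl : x = y) s
      simp [D, hre]
    deform_one_mem := fun p hp => by
      simp [D, hκ_half hp, lineMap_inv_two, midpoint_comm (e p.1)]
    u_comp := fun p => congrArg (2 * ·) (hρswap p)
    deform_comp := fun p s => by simp [D, hκswap] }⟩

/-- If `X` is an ENR then the diagonal inclusion `ΔX ↪ X × X` is a
`ℤ/2`-cofibration for the transposition involution. -/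
theorem diagonal_isEquivCofibration (X : Type u) [TopologicalSpace X] (hX : IsENR X) :
    IsEquivCofibration (⟨Prod.swap, continuous_swap⟩ : C(X × X, X × X))
      {p : X × X | p.1 = p.2} := by
  obtain ⟨n, e, U, he, hU, heU, r, hr, hre⟩ := hX
  have : TopologicalSpace.MetrizableSpace X := he.metrizableSpace
  obtain ⟨P⟩ := nonempty_equivNDRPair_diagonal_of_retract he.continuous hU heU hr hre
  exact P.isEquivCofibration
end
end

section
/- Let $G$ be a compact Lie group and $p: E \to B$ a $G$-fibration over a paracompact base $B$. Then the equivariant sectional category satisfies $\mathsf{secat}_G(p) \le k$ if and only if the $(k+1)$-fold fibred join $p_k: J^k_B(E) \to B$ admits a global $G$-equivariant section. -/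
open unitInterval Set

noncomputable section

/-! ### Fibred joins -/

/-- Pre-join data: `k+1` points of `E` in a common fibre of `p`, with join coordinates. -/
abbrev JoinPre {E B : Type*} (p : E → B) (k : ℕ) : Type _ :=
  {x : (Fin (k + 1) → E) × (Fin (k + 1) → I) //
    (∀ i j, p (x.1 i) = p (x.1 j)) ∧ (∑ i, ((x.2 i : ℝ))) = 1}

/-- Tuples are identified if the join coordinates agree and the points agree wherever
the join coordinate is nonzero. -/
def joinRel {E B : Type*} (p : E → B) (k : ℕ) (a b : JoinPre p k) : Prop :=
  a.1.2 = b.1.2 ∧ ∀ i, a.1.2 i ≠ 0 → a.1.1 i = b.1.1 i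

/-- The `(k+1)`-fold fibred join `J^k_B(E)` of a map `p : E → B`. -/
def FibredJoin {E B : Type*} [TopologicalSpace E] [TopologicalSpace B]
    (p : E → B) (k : ℕ) : Type _ :=
  Quot (joinRel p k)

instance FibredJoin.instTop {E B : Type*} [TopologicalSpace E] [TopologicalSpace B]
    (p : E → B) (k : ℕ) : TopologicalSpace (FibredJoin p k) :=
  instTopologicalSpaceQuot

lemma JoinPre.exists_ne_zero {E B : Type*} {p : E → B} {k : ℕ} (a : JoinPre p k) :
    ∃ i, a.1.2 i ≠ 0 := by
  by_contra h
  push_neg at h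
  have := a.2.2
  simp only [h] at this
  norm_num at this

/-- The projection `p_k : J^k_B(E) → B`. -/
def joinProj {E B : Type*} [TopologicalSpace E] [TopologicalSpace B]
    (p : E → B) (k : ℕ) : FibredJoin p k → B :=
  Quot.lift (fun a => p (a.1.1 0)) (by
    rintro a b ⟨ht, he⟩
    obtain ⟨i, hi⟩ := a.exists_ne_zero
    have h1 : p (a.1.1 0) = p (a.1.1 i) := a.2.1 0 i
    have h2 : p (b.1.1 i) = p (b.1.1 0) := b.2.1 i 0
    simp only [h1, he i hi, h2])

/-- The class of a tuple in the fibred join. -/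
def joinMk {E B : Type*} [TopologicalSpace E] [TopologicalSpace B]
    (p : E → B) (k : ℕ) (a : JoinPre p k) : FibredJoin p k :=
  Quot.mk _ a
/-! ### Group actions on fibred joins and lifting functions -/

/-- The diagonal `G`-action on the fibred join of an equivariant map `p`. -/
def joinSMul {G E B : Type*} [Group G] [TopologicalSpace E] [TopologicalSpace B]
    [MulAction G E] [MulAction G B] {p : E → B} (hp : ∀ (g : G) (e : E), p (g • e) = g • p e)
    (k : ℕ) (g : G) : FibredJoin p k → FibredJoin p k :=
  Quot.map
    (fun a => ⟨((fun i => g • a.1.1 i), a.1.2),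
      ⟨fun i j => by simp only [hp, a.2.1 i j], a.2.2⟩⟩)
    (by rintro a b ⟨ht, he⟩; exact ⟨ht, fun i hi => by simp only [he i hi]⟩)

/-- A `G`-lifting function for an equivariant map `p : E → B`: a continuous equivariant
choice of path lifts. -/
def IsGLiftingFunction {G E B : Type*} [Group G] [TopologicalSpace G]
    [TopologicalSpace E] [TopologicalSpace B] [MulAction G E] [MulAction G B]
    [ContinuousSMul G E] [ContinuousSMul G B] (p : E → B)
    (lam : {q : E × C(I, B) // q.2 0 = p q.1} → C(I, E)) : Prop :=
  Continuous lam ∧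
  (∀ q, lam q 0 = q.1.1) ∧
  (∀ q t, p (lam q t) = q.1.2 t) ∧
  (∀ (g : G) (q : {q : E × C(I, B) // q.2 0 = p q.1})
      (hg : (g • q.1.2 : C(I, B)) 0 = p (g • q.1.1)),
      lam ⟨(g • q.1.1, g • q.1.2), hg⟩ = g • lam q)
universe u

/-- The equivariant homotopy lifting property of a `G`-map with respect to all `G`-spaces:
`p` is a `G`-fibration. -/
def IsGFibration (G : Type*) {E B : Type u} [Group G] [TopologicalSpace G]
    [TopologicalSpace E] [TopologicalSpace B] [MulAction G E] [MulAction G B]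
    [ContinuousSMul G E] [ContinuousSMul G B] (p : E → B) : Prop :=
  ∀ (Y : Type u) [TopologicalSpace Y] [MulAction G Y] [ContinuousSMul G Y]
    (f : Y → E), Continuous f → (∀ (g : G) (y : Y), f (g • y) = g • f y) →
    ∀ (H : Y × I → B), Continuous H → (∀ (g : G) (y : Y) (t : I), H (g • y, t) = g • H (y, t)) →
    (∀ y, H (y, 0) = p (f y)) →
    ∃ F : Y × I → E, Continuous F ∧ (∀ y, F (y, 0) = f y) ∧
      (∀ y t, p (F (y, t)) = H (y, t)) ∧
      (∀ (g : G) (y : Y) (t : I), F (g • y, t) = g • F (y, t))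

/-- The equivariant sectional category of `p` is at most `k`: `B` is covered by `k+1`
invariant open sets, each admitting a continuous equivariant local section of `p`. -/
def secatG_le (G : Type*) {E B : Type*} [Group G] [TopologicalSpace G]
    [TopologicalSpace E] [TopologicalSpace B] [MulAction G E] [MulAction G B]
    [ContinuousSMul G E] [ContinuousSMul G B] (p : E → B) (k : ℕ) : Prop :=
  ∃ U : Fin (k + 1) → Set B,
    (∀ i, IsOpen (U i)) ∧
    (∀ i (g : G), ∀ b ∈ U i, g • b ∈ U i) ∧
    (⋃ i, U i) = Set.univ ∧
    (∀ i, ∃ s : (U i) → E, Continuous s ∧ (∀ b : U i, p (s b) = b) ∧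
      (∀ (g : G) (b : U i) (hg : g • (b : B) ∈ U i), s ⟨g • (b : B), hg⟩ = g • s b))


/-!
Averaging a partition of unity subordinate to the invariant cover over the Haar measure of the
compact group makes it invariant. Its functions serve as join coordinates and the equivariant local
sections as points; where a local section is undefined, the corresponding coordinate vanishes
nearby, so any equivariant choice of point there gives a continuous equivariant section of the join.
Conversely, for a global section the sets where its `i`-th join coordinate is nonzero form an
invariant open cover, on which its `i`-th point is a continuous equivariant local section.
-/

open MeasureTheory Topology Filter Function Pointwise

section FibredJoin

variable {E B : Type*} {p : E → B} {k : ℕ}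

lemma joinRel_equivalence : Equivalence (joinRel p k) where
  refl _ := ⟨rfl, fun _ _ => rfl⟩
  symm := fun ⟨ht, he⟩ => ⟨ht.symm, fun i hi => (he i (ht ▸ hi)).symm⟩
  trans := fun ⟨ht, he⟩ ⟨ht', he'⟩ =>
    ⟨ht.trans ht', fun i hi => (he i hi).trans (he' i (ht ▸ hi))⟩

variable [TopologicalSpace E] [TopologicalSpace B]

lemma joinMk_eq_joinMk_iff {a b : JoinPre p k} :
    joinMk p k a = joinMk p k b ↔ joinRel p k a b :=
  ⟨fun h => joinRel_equivalence.eqvGen_iff.mp (Quot.eqvGen_exact h), Quot.sound⟩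

variable (p k)

def joinCoord (i : Fin (k + 1)) : FibredJoin p k → I :=
  Quot.lift (fun a => a.1.2 i) fun _ _ h => congrFun h.1 i

/-- The `i`-th point of a class in the fibred join, read off an arbitrary representative: it is
only meaningful where the `i`-th join coordinate is nonzero. -/
def joinPoint (i : Fin (k + 1)) (x : FibredJoin p k) : E :=
  (Quot.out x).1.1 i

variable {p k}

lemma continuous_joinCoord (i : Fin (k + 1)) : Continuous (joinCoord p k i) :=
  continuous_quot_lift _ ((continuous_apply i).comp (continuous_snd.comp continuous_subtype_val))

lemma joinCoord_joinSMul {G : Type*} [Group G] [MulAction G E] [MulAction G B]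
    (hp : ∀ (g : G) (e : E), p (g • e) = g • p e) (g : G) (i : Fin (k + 1))
    (x : FibredJoin p k) : joinCoord p k i (joinSMul hp k g x) = joinCoord p k i x := by
  induction x using Quot.ind
  rfl

lemma exists_joinCoord_ne_zero (x : FibredJoin p k) : ∃ i, joinCoord p k i x ≠ 0 := by
  induction x using Quot.ind with
  | mk a => exact a.exists_ne_zero

lemma joinPoint_joinMk (a : JoinPre p k) {i : Fin (k + 1)} (hi : a.1.2 i ≠ 0) :
    joinPoint p k i (joinMk p k a) = a.1.1 i := by
  obtain ⟨ht, he⟩ := joinMk_eq_joinMk_iff.mp (Quot.out_eq (joinMk p k a))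
  exact he i (ht ▸ hi)

lemma apply_joinPoint (i : Fin (k + 1)) (x : FibredJoin p k) :
    p (joinPoint p k i x) = joinProj p k x := by
  conv_rhs => rw [← Quot.out_eq x]
  exact (Quot.out x).2.1 i 0

lemma joinPoint_joinSMul {G : Type*} [Group G] [MulAction G E] [MulAction G B]
    (hp : ∀ (g : G) (e : E), p (g • e) = g • p e) (g : G) {i : Fin (k + 1)}
    {x : FibredJoin p k} (hx : joinCoord p k i x ≠ 0) :
    joinPoint p k i (joinSMul hp k g x) = g • joinPoint p k i x := by
  induction x using Quot.ind with
  | mk a =>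
    have hsmul : joinPoint p k i (joinSMul hp k g (joinMk p k a)) = g • a.1.1 i :=
      joinPoint_joinMk _ hx
    exact hsmul.trans (congrArg (g • ·) (joinPoint_joinMk a hx).symm)

lemma continuousOn_joinPoint (i : Fin (k + 1)) :
    ContinuousOn (joinPoint p k i) {x | joinCoord p k i x ≠ 0} := by
  have hq := (isQuotientMap_quot_mk (r := joinRel p k)).restrictPreimage_isOpen
    (isOpen_ne_fun (continuous_joinCoord i) (continuous_const (y := 0)))
  rw [continuousOn_iff_continuous_domRestrict]
  refine hq.continuous_iff.2 <| ((continuous_apply i).comp (continuous_fst.comp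
    (continuous_subtype_val.comp continuous_subtype_val))).congr fun a => ?_
  exact (joinPoint_joinMk _ a.2).symm

/-- Points that are discontinuous at `x` may be replaced by a continuous one without changing
the class, since their join coordinates vanish near `x`. -/
lemma continuousAt_joinMk_comp {X : Type*} [TopologicalSpace X] {a : X → JoinPre p k} {x : X}
    (ht : ∀ i, ContinuousAt (fun y => (a y).1.2 i) x)
    (he : ∀ i, ContinuousAt (fun y => (a y).1.1 i) x ∨ ∀ᶠ y in 𝓝 x, (a y).1.2 i = 0) :
    ContinuousAt (fun y => joinMk p k (a y)) x := by
  classical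
  obtain ⟨j, hj⟩ := (a x).exists_ne_zero
  have hej : ContinuousAt (fun y => (a y).1.1 j) x :=
    (he j).resolve_right fun h => hj h.self_of_nhds
  let good (i : Fin (k + 1)) : Prop := ContinuousAt (fun y => (a y).1.1 i) x
  let a' : X → JoinPre p k := fun y =>
    ⟨(fun i => if good i then (a y).1.1 i else (a y).1.1 j, (a y).1.2),
      fun i i' => by dsimp only; split_ifs <;> exact (a y).2.1 _ _, (a y).2.2⟩
  have ha' : ContinuousAt a' x := by
    refine IsInducing.subtypeVal.continuousAt_iff.2 (ContinuousAt.prodMk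
      (continuousAt_pi.2 fun i => ?_) (continuousAt_pi.2 ht))
    by_cases hi : good i
    · simpa only [if_pos hi] using hi
    · simpa only [if_neg hi] using hej
  have hbad : ∀ᶠ y in 𝓝 x, ∀ i, ¬good i → (a y).1.2 i = 0 := by
    refine eventually_all.2 fun i => ?_
    by_cases hi : good i
    · exact .of_forall fun _ h => absurd hi h
    · exact ((he i).resolve_left hi).mono fun _ hy _ => hy
  refine (continuous_quot_mk.continuousAt.comp ha').congr ?_
  filter_upwards [hbad] with y hy
  exact Quot.sound ⟨rfl, fun i hi => if_pos (not_not.1 fun h => hi (hy i h))⟩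

end FibredJoin

theorem secatG_le_of_exists_section (G : Type*) {E B : Type*} [Group G] [TopologicalSpace G]
    [TopologicalSpace E] [TopologicalSpace B] [MulAction G E] [MulAction G B]
    [ContinuousSMul G E] [ContinuousSMul G B] {p : E → B} {k : ℕ}
    (hp : ∀ (g : G) (e : E), p (g • e) = g • p e)
    (h : ∃ s : B → FibredJoin p k, Continuous s ∧ (∀ b, joinProj p k (s b) = b) ∧
      ∀ (g : G) (b : B), s (g • b) = joinSMul hp k g (s b)) :
    secatG_le G p k := by
  obtain ⟨s, hs, hsp, hse⟩ := h
  refine ⟨fun i => {b | joinCoord p k i (s b) ≠ 0}, fun i => ?_, fun i g b hb => ?_, ?_,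
    fun i => ⟨fun b => joinPoint p k i (s b), ?_, fun b => ?_, fun g b _ => ?_⟩⟩
  · exact isOpen_ne_fun ((continuous_joinCoord i).comp hs) continuous_const
  · simpa only [mem_ofPred_eq, hse, joinCoord_joinSMul] using hb
  · exact eq_univ_of_forall fun b => mem_iUnion.2 (exists_joinCoord_ne_zero (s b))
  · exact (continuousOn_joinPoint i).comp_continuous (hs.comp continuous_subtype_val) Subtype.prop
  · exact (apply_joinPoint i (s b)).trans (hsp b)
  · simp only [hse, joinPoint_joinSMul hp g b.2]

section OrbitAverage

variable {G X F : Type*} [Group G] [MeasurableSpace G] [MulAction G X]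
  [NormedAddCommGroup F] [NormedSpace ℝ F]

def orbitAverage (μ : Measure G) (φ : X → F) (x : X) : F :=
  ∫ g, φ (g⁻¹ • x) ∂μ

lemma orbitAverage_smul [MeasurableMul G] (μ : Measure G) [μ.IsMulLeftInvariant] (φ : X → F)
    (g : G) (x : X) : orbitAverage μ φ (g • x) = orbitAverage μ φ x := by
  simpa only [orbitAverage, mul_inv_rev, inv_inv, mul_smul] using
    integral_mul_left_eq_self (μ := μ) (fun h => φ (h⁻¹ • x)) g⁻¹

lemma orbitAverage_const [CompleteSpace F] (μ : Measure G) [IsProbabilityMeasure μ] (c : F)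
    (x : X) : orbitAverage μ (fun _ => c) x = c := by
  simp only [orbitAverage, integral_const, probReal_univ, one_smul]

lemma support_orbitAverage_subset (μ : Measure G) (φ : X → F) :
    support (orbitAverage μ φ) ⊆ (univ : Set G) • support φ := by
  intro x hx
  by_contra hx'
  refine hx (integral_eq_zero_of_ae (.of_forall fun g => ?_))
  by_contra hg
  exact hx' ⟨g, mem_univ g, g⁻¹ • x, hg, smul_inv_smul g x⟩

variable [TopologicalSpace G] [IsTopologicalGroup G] [CompactSpace G] [TopologicalSpace X]
  [ContinuousSMul G X]

lemma tsupport_orbitAverage_subset (μ : Measure G) (φ : X → F) :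
    tsupport (orbitAverage μ φ) ⊆ (univ : Set G) • tsupport φ :=
  closure_minimal ((support_orbitAverage_subset μ φ).trans
      (smul_subset_smul_left (subset_tsupport φ)))
    (isClosed_tsupport φ |>.smul_left_of_isCompact isCompact_univ)

variable [BorelSpace G]

lemma continuous_orbitAverage (μ : Measure G) [IsFiniteMeasure μ] {φ : X → F}
    (hφ : Continuous φ) : Continuous (orbitAverage μ φ) :=
  continuousOn_univ.1 <| continuousOn_integral_of_compact_support isCompact_univ
    (hφ.comp (continuous_snd.inv.smul continuous_fst)).continuousOn
    fun _ _ _ h => absurd (mem_univ _) h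

lemma orbitAverage_finset_sum (μ : Measure G) [IsFiniteMeasure μ] {ι : Type*} (s : Finset ι)
    {φ : ι → X → F} (hφ : ∀ i ∈ s, Continuous (φ i)) (x : X) :
    orbitAverage μ (fun y => ∑ i ∈ s, φ i y) x = ∑ i ∈ s, orbitAverage μ (φ i) x :=
  integral_finsetSum s fun i hi =>
    ((hφ i hi).comp (continuous_inv.smul continuous_const)).integrable_of_hasCompactSupport
      (.of_compactSpace _)

end OrbitAverage

theorem PartitionOfUnity.exists_isSubordinate_smul_invariant (G : Type*) {ι X : Type*} [Fintype ι]
    [Group G] [TopologicalSpace G] [IsTopologicalGroup G] [CompactSpace G] [TopologicalSpace X]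
    [NormalSpace X] [ParacompactSpace X] [MulAction G X] [ContinuousSMul G X] (U : ι → Set X)
    (ho : ∀ i, IsOpen (U i)) (hinv : ∀ i (g : G), ∀ x ∈ U i, g • x ∈ U i)
    (hU : ⋃ i, U i = univ) :
    ∃ f : PartitionOfUnity ι X, f.IsSubordinate U ∧ ∀ i (g : G) x, f i (g • x) = f i x := by
  obtain ⟨f₀, hf₀⟩ := PartitionOfUnity.exists_isSubordinate isClosed_univ U ho hU.ge
  borelize G
  let μ : Measure G := Measure.haarMeasure ⊤
  have : IsProbabilityMeasure μ := ⟨by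
    simpa using Measure.haarMeasure_self (K₀ := (⊤ : TopologicalSpace.PositiveCompacts G))⟩
  have hsum (x : X) : ∑ i, orbitAverage μ (f₀ i) x = 1 := by
    rw [← orbitAverage_finset_sum μ _ fun i _ => (f₀ i).continuous]
    simp only [← finsum_eq_sum_of_fintype, f₀.sum_eq_one (mem_univ _), orbitAverage_const]
  let f : PartitionOfUnity ι X :=
    { toFun i := ⟨orbitAverage μ (f₀ i), continuous_orbitAverage μ (f₀ i).continuous⟩
      locallyFinite' := locallyFinite_of_finite _
      nonneg' i x := integral_nonneg fun g => f₀.nonneg i _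
      sum_eq_one' x _ := by simpa [finsum_eq_sum_of_fintype] using hsum x
      sum_le_one' x := by simp [finsum_eq_sum_of_fintype, hsum x] }
  refine ⟨f, fun i => ?_, fun i g x => orbitAverage_smul μ (f₀ i) g x⟩
  refine (tsupport_orbitAverage_subset μ (f₀ i)).trans ?_
  exact smul_subset_iff.2 fun g _ x hx => hinv i g x (hf₀ i hx)

section CoverIndex

variable {ι B : Type*} [LinearOrder ι] [WellFoundedLT ι] {U : ι → Set B}

def coverIndex (hU : ⋃ i, U i = univ) (b : B) : ι :=
  wellFounded_lt.min {i | b ∈ U i} (mem_iUnion.1 (hU.ge (mem_univ b)))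

lemma mem_coverIndex (hU : ⋃ i, U i = univ) (b : B) : b ∈ U (coverIndex hU b) :=
  wellFounded_lt.min_mem {i | b ∈ U i} _

lemma coverIndex_smul {G : Type*} [Group G] [MulAction G B] (hU : ⋃ i, U i = univ)
    (hinv : ∀ i (g : G), ∀ b ∈ U i, g • b ∈ U i) (g : G) (b : B) :
    coverIndex hU (g • b) = coverIndex hU b := by
  have hset : {i | g • b ∈ U i} = {i | b ∈ U i} := by
    ext i
    exact ⟨fun h => by simpa using hinv i g⁻¹ _ h, hinv i g b⟩
  simp only [coverIndex, hset]

end CoverIndex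

section CoverPoint

variable {G E B : Type*} [Group G] [MulAction G E] [MulAction G B] {p : E → B} {k : ℕ}
  {U : Fin (k + 1) → Set B} (hU : ⋃ i, U i = univ) (s : ∀ i, U i → E)

open Classical in
def coverPoint (b : B) (i : Fin (k + 1)) : E :=
  if h : b ∈ U i then s i ⟨b, h⟩ else s (coverIndex hU b) ⟨b, mem_coverIndex hU b⟩

lemma apply_coverPoint (hsp : ∀ i b, p (s i b) = b) (b : B) (i : Fin (k + 1)) :
    p (coverPoint hU s b i) = b := by
  unfold coverPoint
  split_ifs <;> exact hsp _ _

lemma coverPoint_smul (hinv : ∀ i (g : G), ∀ b ∈ U i, g • b ∈ U i)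
    (hse : ∀ i (g : G) (b : U i) (hg : g • (b : B) ∈ U i), s i ⟨g • (b : B), hg⟩ = g • s i b)
    (g : G) (b : B) (i : Fin (k + 1)) :
    coverPoint hU s (g • b) i = g • coverPoint hU s b i := by
  unfold coverPoint
  by_cases hb : b ∈ U i
  · rw [dif_pos (hinv i g b hb), dif_pos hb]
    exact hse i g ⟨b, hb⟩ _
  · have hgb : g • b ∉ U i := fun h => hb (by simpa using hinv i g⁻¹ _ h)
    rw [dif_neg hgb, dif_neg hb]
    have key : ∀ j (hj : g • b ∈ U j), j = coverIndex hU b →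
        s j ⟨g • b, hj⟩ = g • s (coverIndex hU b) ⟨b, mem_coverIndex hU b⟩ := by
      rintro j hj rfl
      exact hse _ g ⟨b, mem_coverIndex hU b⟩ hj
    exact key _ _ (coverIndex_smul hU hinv g b)

lemma continuousAt_coverPoint {b : B} {i : Fin (k + 1)} [TopologicalSpace B]
    [TopologicalSpace E] (ho : IsOpen (U i)) (hs : Continuous (s i)) (hb : b ∈ U i) :
    ContinuousAt (fun b => coverPoint hU s b i) b := by
  refine ContinuousOn.continuousAt ?_ (ho.mem_nhds hb)
  rw [continuousOn_iff_continuous_domRestrict]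
  exact hs.congr fun b => (dif_pos b.2 : coverPoint hU s b i = s i b).symm

end CoverPoint

theorem exists_section_of_secatG_le {G E B : Type*} [Group G] [TopologicalSpace G]
    [IsTopologicalGroup G] [CompactSpace G] [TopologicalSpace E] [TopologicalSpace B]
    [NormalSpace B] [ParacompactSpace B] [MulAction G E] [MulAction G B] [ContinuousSMul G E]
    [ContinuousSMul G B] {p : E → B} {k : ℕ} (hp : ∀ (g : G) (e : E), p (g • e) = g • p e)
    (h : secatG_le G p k) :
    ∃ s : B → FibredJoin p k, Continuous s ∧ (∀ b, joinProj p k (s b) = b) ∧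
      ∀ (g : G) (b : B), s (g • b) = joinSMul hp k g (s b) := by
  obtain ⟨U, ho, hinv, hU, hs⟩ := h
  choose s hsc hsp hse using hs
  obtain ⟨f, hfU, hf⟩ := PartitionOfUnity.exists_isSubordinate_smul_invariant G U ho hinv hU
  let a (b : B) : JoinPre p k :=
    ⟨(coverPoint hU s b, fun i => ⟨f i b, f.nonneg i b, f.le_one i b⟩),
      fun i j => by simp only [apply_coverPoint hU s hsp],
      by simpa [finsum_eq_sum_of_fintype] using f.sum_eq_one (mem_univ b)⟩
  refine ⟨fun b => joinMk p k (a b), continuous_iff_continuousAt.2 fun b => ?_,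
    fun b => apply_coverPoint hU s hsp b 0, fun g b => ?_⟩
  · refine continuousAt_joinMk_comp (fun i => ((f i).continuous.subtype_mk _).continuousAt)
      fun i => ?_
    by_cases hb : b ∈ U i
    · exact .inl (continuousAt_coverPoint hU s (ho i) (hsc i) hb)
    · exact .inr ((notMem_tsupport_iff_eventuallyEq.1 (mt (hfU i ·) hb)).mono
        fun y hy => Subtype.ext hy)
  · exact congrArg (joinMk p k) (Subtype.ext (Prod.ext
      (funext (coverPoint_smul hU s hinv hse g b)) (funext fun i => Subtype.ext (hf i g b))))

theorem secatG_le_iff_fibredJoin_section_general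
    {EG : Type*} [NormedAddCommGroup EG] [NormedSpace ℝ EG]
    (G : Type*) [Group G] [TopologicalSpace G] [ChartedSpace EG G]
    [LieGroup (modelWithCornersSelf ℝ EG) (⊤ : ℕ∞) G] [CompactSpace G]
    {E B : Type u} [TopologicalSpace E] [TopologicalSpace B]
    [MulAction G E] [MulAction G B] [ContinuousSMul G E] [ContinuousSMul G B]
    [ParacompactSpace B] [T2Space B]
    (p : E → B) (hp : ∀ (g : G) (e : E), p (g • e) = g • p e) (k : ℕ) :
    secatG_le G p k ↔
    ∃ s : B → FibredJoin p k, Continuous s ∧ (∀ b, joinProj p k (s b) = b) ∧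
      (∀ (g : G) (b : B), s (g • b) = joinSMul hp k g (s b)) := by
  have : IsTopologicalGroup G :=
    topologicalGroup_of_lieGroup (modelWithCornersSelf ℝ EG) ((⊤ : ℕ∞) : WithTop ℕ∞)
  exact ⟨exists_section_of_secatG_le hp, secatG_le_of_exists_section G hp⟩

/-- Let `G` be a compact Lie group and `p : E → B` a `G`-fibration over a
paracompact base. Then `secat_G(p) ≤ k` if and only if the `(k+1)`-fold fibred join
`p_k : J^k_B(E) → B` admits a global `G`-equivariant section. -/
theorem secatG_le_iff_fibredJoin_section
    {EG : Type*} [NormedAddCommGroup EG] [NormedSpace ℝ EG]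
    (G : Type*) [Group G] [TopologicalSpace G] [ChartedSpace EG G]
    [LieGroup (modelWithCornersSelf ℝ EG) (⊤ : ℕ∞) G] [CompactSpace G]
    {E B : Type u} [TopologicalSpace E] [TopologicalSpace B]
    [MulAction G E] [MulAction G B] [ContinuousSMul G E] [ContinuousSMul G B]
    [ParacompactSpace B] [T2Space B]
    (p : E → B) (hpc : Continuous p) (hp : ∀ (g : G) (e : E), p (g • e) = g • p e)
    (hfib : IsGFibration G p) (k : ℕ) :
    secatG_le G p k ↔
    ∃ s : B → FibredJoin p k, Continuous s ∧ (∀ b, joinProj p k (s b) = b) ∧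
      (∀ (g : G) (b : B), s (g • b) = joinSMul hp k g (s b)) :=
  secatG_le_iff_fibredJoin_section_general (EG := EG) G p hp k
end
end

section
/- Let $X$ be a path-connected space and $U \subseteq X \times X$ an open subset invariant under the transposition involution. Then $U$ admits a local $\mathbb{Z}/2$-equivariant section of the evaluation map $\pi: PX \to X \times X$ (i.e., a continuous $\sigma: U \to PX$ with $\sigma(x,y)(0)=x$, $\sigma(x,y)(1)=y$, and $\sigma(y,x)(t) = \sigma(x,y)(1-t)$) if and only if the inclusion $U \hookrightarrow X \times X$ is $\mathbb{Z}/2$-equivariantly homotopic to a map with values in the diagonal $\Delta X$. -/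
open unitInterval Set

noncomputable section

def halfI : C(I, I) :=
  ⟨fun t => ⟨(t : ℝ) / 2, ⟨by linarith [t.2.1], by nlinarith [t.2.2]⟩⟩,
   Continuous.subtype_mk (continuous_subtype_val.div_const 2) _⟩

def cohalfI : C(I, I) := ContinuousMap.comp ⟨unitInterval.symm, unitInterval.continuous_symm⟩ halfI

lemma halfI_zero : halfI 0 = 0 := by ext; simp [halfI]
lemma cohalfI_zero : cohalfI 0 = 1 := by ext; simp [cohalfI, halfI, unitInterval.coe_symm_eq]
lemma halfI_one_eq : halfI 1 = cohalfI 1 := by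
  ext; simp [cohalfI, halfI, unitInterval.coe_symm_eq]; norm_num

lemma pI0 : Set.projIcc (0:ℝ) 1 zero_le_one 0 = 0 := by
  rw [Set.projIcc_left]; rfl
lemma pI1 : Set.projIcc (0:ℝ) 1 zero_le_one 1 = 1 := by
  rw [Set.projIcc_right]; rfl


/-- An invariant open set `U ⊆ X × X` admits an equivariant local section
of the evaluation map `π : PX → X × X` if and only if the inclusion `U ↪ X × X` is
`ℤ/2`-equivariantly homotopic to a map with values in the diagonal. -/
theorem symSection_iff_deformable_to_diagonal
    (X : Type*) [TopologicalSpace X] [PathConnectedSpace X]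
    (U : Set (X × X)) (hUo : IsOpen U) (hUinv : ∀ p ∈ U, Prod.swap p ∈ U) :
    (∃ sec : C(U, PathSp X), IsSymSection U sec) ↔
    (∃ H : C(U × I, X × X),
      (∀ u : U, H (u, 0) = (u : X × X)) ∧
      (∀ u : U, (H (u, 1)).1 = (H (u, 1)).2) ∧
      (∀ (u : U) (hs : Prod.swap (u : X × X) ∈ U) (t : I),
        H (⟨Prod.swap (u : X × X), hs⟩, t) = Prod.swap (H (u, t)))) := by
  constructor
  · rintro ⟨sec, hends, hsym⟩
    refine ⟨⟨fun p => (sec.uncurry (p.1, halfI p.2), sec.uncurry (p.1, cohalfI p.2)), by fun_prop⟩,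
      ?_, ?_, ?_⟩
    · intro u
      show (sec u (halfI 0), sec u (cohalfI 0)) = _
      rw [halfI_zero, cohalfI_zero, (hends u).1, (hends u).2]
    · intro u
      show sec u (halfI 1) = sec u (cohalfI 1)
      rw [halfI_one_eq]
    · intro u hs t
      show (sec ⟨_, hs⟩ (halfI t), sec ⟨_, hs⟩ (cohalfI t))
        = Prod.swap (sec u (halfI t), sec u (cohalfI t))
      rw [hsym u hs (halfI t), hsym u hs (cohalfI t)]
      have e1 : unitInterval.symm (halfI t) = cohalfI t := rfl
      have e2 : unitInterval.symm (cohalfI t) = halfI t := unitInterval.symm_symm _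
      rw [e1, e2]
      rfl
  · rintro ⟨H, h0, h1, hsw⟩
    have hF : Continuous (fun p : U × I =>
        if (p.2 : ℝ) ≤ 1/2 then (H (p.1, Set.projIcc 0 1 zero_le_one (2 * (p.2:ℝ)))).1
        else (H (p.1, Set.projIcc 0 1 zero_le_one (2 - 2 * (p.2:ℝ)))).2) := by
      have hpj : ∀ g : U × I → ℝ, Continuous g →
          Continuous fun p => Set.projIcc (0:ℝ) 1 zero_le_one (g p) :=
        fun g hg => continuous_projIcc.comp hg
      apply Continuous.if_le
      · exact continuous_fst.comp (H.continuous.comp (continuous_fst.prodMk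
          (hpj _ (continuous_const.mul (continuous_subtype_val.comp continuous_snd)))))
      · exact continuous_snd.comp (H.continuous.comp (continuous_fst.prodMk
          (hpj _ (continuous_const.sub (continuous_const.mul (continuous_subtype_val.comp continuous_snd))))))
      · exact continuous_subtype_val.comp continuous_snd
      · exact continuous_const
      · intro p hp
        have e : Set.projIcc (0:ℝ) 1 zero_le_one (2 * (p.2:ℝ)) = 1 := by
          rw [hp]; norm_num
        have e' : Set.projIcc (0:ℝ) 1 zero_le_one (2 - 2 * (p.2:ℝ)) = 1 := by
          rw [hp]; norm_num
        rw [e, e']; exact h1 p.1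
    refine ⟨(ContinuousMap.mk _ hF).curry, ?_, ?_⟩
    · intro u
      constructor
      · show (if ((0:I) : ℝ) ≤ 1/2 then _ else _) = _
        rw [if_pos (by norm_num)]
        show (H (u, Set.projIcc 0 1 zero_le_one (2 * ((0:I):ℝ)))).1 = _
        norm_num [pI0, h0 u]
      · show (if ((1:I) : ℝ) ≤ 1/2 then _ else _) = _
        rw [if_neg (by norm_num)]
        show (H (u, Set.projIcc 0 1 zero_le_one (2 - 2 * ((1:I):ℝ)))).2 = _
        norm_num [pI0, h0 u]
    · intro u hs t
      show (if (t : ℝ) ≤ 1/2 then _ else _) = (if ((unitInterval.symm t : I) : ℝ) ≤ 1/2 then _ else _)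
      rcases lt_trichotomy (t : ℝ) (1/2) with h | h | h
      · rw [if_pos h.le, if_neg (by rw [unitInterval.coe_symm_eq]; linarith)]
        show (H (⟨_, hs⟩, _)).1 = (H (u, Set.projIcc 0 1 zero_le_one (2 - 2 * ((unitInterval.symm t : I):ℝ)))).2
        have e : 2 - 2 * ((unitInterval.symm t : I) : ℝ) = 2 * (t : ℝ) := by
          rw [unitInterval.coe_symm_eq]; ring
        rw [e, hsw u hs]
        rfl
      · rw [if_pos h.le, if_pos (by rw [unitInterval.coe_symm_eq, h]; norm_num)]
        show (H (⟨_, hs⟩, _)).1 = (H (u, Set.projIcc 0 1 zero_le_one (2 * ((unitInterval.symm t : I):ℝ)))).1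
        have e : Set.projIcc (0:ℝ) 1 zero_le_one (2 * (t:ℝ)) = 1 := by
          rw [h]; norm_num
        have e' : Set.projIcc (0:ℝ) 1 zero_le_one (2 * ((unitInterval.symm t : I):ℝ)) = 1 := by
          rw [unitInterval.coe_symm_eq, h]; norm_num
        rw [e, e', hsw u hs]
        exact (h1 u).symm
      · rw [if_neg (by linarith), if_pos (by rw [unitInterval.coe_symm_eq]; linarith)]
        show (H (⟨_, hs⟩, _)).2 = (H (u, Set.projIcc 0 1 zero_le_one (2 * ((unitInterval.symm t : I):ℝ)))).1
        have e : 2 * ((unitInterval.symm t : I) : ℝ) = 2 - 2 * (t : ℝ) := by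
          rw [unitInterval.coe_symm_eq]; ring
        rw [e, hsw u hs]
        rfl
end
end

section
/- Let $X$ be a paracompact ENR. Then the monoidal symmetrized topological complexity equals the symmetrized topological complexity: $\mathsf{TC}^{M,\Sigma}(X) = \mathsf{TC}^\Sigma(X)$. -/
open unitInterval Set

noncomputable section

/-! ### Auxiliary constructions -/

set_option linter.unusedSectionVars false
set_option maxHeartbeats 1000000

/- ### projIcc helpers -/

def ii : ℝ → I := fun s => Set.projIcc 0 1 zero_le_one s

lemma ii_coe_eq (s : ℝ) : ((ii s : ℝ)) = max 0 (min 1 s) := rfl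

lemma ii_symm (s : ℝ) : ii (1 - s) = unitInterval.symm (ii s) := by
  ext
  rw [unitInterval.coe_symm_eq, ii_coe_eq, ii_coe_eq]
  rcases le_total s 0 with h | h
  · rw [min_eq_left (by linarith : (1:ℝ) ≤ 1 - s), max_eq_right zero_le_one,
      min_eq_right (by linarith : s ≤ (1:ℝ)), max_eq_left h]
    norm_num
  · rcases le_total 1 s with h1 | h1
    · rw [min_eq_right (by linarith : 1 - s ≤ (1:ℝ)), max_eq_left (by linarith : 1 - s ≤ (0:ℝ)),
        min_eq_left h1, max_eq_right zero_le_one]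
      norm_num
    · rw [min_eq_right (by linarith : 1 - s ≤ (1:ℝ)), max_eq_right (by linarith : (0:ℝ) ≤ 1 - s),
        min_eq_right h1, max_eq_right h]

lemma ii_coe {s : ℝ} (h0 : 0 ≤ s) (h1 : s ≤ 1) : ((ii s : ℝ)) = s := by
  rw [ii_coe_eq, min_eq_right h1, max_eq_right h0]

lemma ii_zero : ii 0 = 0 := by ext; rw [ii_coe le_rfl zero_le_one]; rfl
lemma ii_one : ii 1 = 1 := by ext; rw [ii_coe zero_le_one le_rfl]; rfl
lemma ii_coeI (t : I) : ii (t : ℝ) = t := by ext; exact ii_coe t.2.1 t.2.2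
lemma ii_one_sub_coe (s : ℝ) : ((ii (1 - s) : ℝ)) = 1 - ((ii s : ℝ)) := by
  rw [ii_symm, unitInterval.coe_symm_eq]

lemma continuous_ii : Continuous ii := @continuous_projIcc ℝ _ 0 1 zero_le_one _ _

lemma isOpen_forall_compact {A B C : Type*} [TopologicalSpace A] [TopologicalSpace B]
    [TopologicalSpace C] [CompactSpace B] {F : A × B → C} (hF : Continuous F)
    {W : Set C} (hW : IsOpen W) : IsOpen {a | ∀ b, F (a, b) ∈ W} := by
  have h1 : IsClosed (Prod.fst '' (F ⁻¹' Wᶜ)) :=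
    isClosedMap_fst_of_compactSpace _ (hW.isClosed_compl.preimage hF)
  have h2 : {a | ∀ b, F (a, b) ∈ W} = (Prod.fst '' (F ⁻¹' Wᶜ))ᶜ := by
    ext a
    simp only [mem_setOf_eq, mem_compl_iff, mem_image, mem_preimage, Prod.exists, not_exists]
    constructor
    · rintro h x b ⟨hb, rfl⟩
      exact hb (h b)
    · intro h b
      by_contra hb
      exact h a b ⟨hb, rfl⟩
  rw [h2]
  exact h1.isOpen_compl

/- ### the straight-line retracted path -/

section Construction
variable {X : Type*} [TopologicalSpace X] {n : ℕ}
variable (e : X → EuclideanSpace ℝ (Fin n)) (U₀ : Set (EuclideanSpace ℝ (Fin n))) (r : U₀ → X)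

def segE (p : X × X) (s : ℝ) : EuclideanSpace ℝ (Fin n) :=
  (1 - (ii s : ℝ)) • e p.1 + (ii s : ℝ) • e p.2

def WW : Set (X × X) := {p | ∀ t : I, segE e p (t : ℝ) ∈ U₀}

lemma WW_mem {p : X × X} (hp : p ∈ WW e U₀) (s : ℝ) : segE e p s ∈ U₀ := by
  have h2 : segE e p s = segE e p ((ii s : ℝ)) := by
    unfold segE
    rw [ii_coe (ii s).2.1 (ii s).2.2]
  rw [h2]
  exact hp (ii s)

def cW : ↥(WW e U₀) × ℝ → X := fun q => r ⟨segE e q.1 q.2, WW_mem e U₀ q.1.2 q.2⟩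

lemma continuous_segE (hec : Continuous e) :
    Continuous (fun q : (X × X) × ℝ => segE e q.1 q.2) := by
  unfold segE
  have h1 : Continuous fun q : (X × X) × ℝ => ((ii q.2 : ℝ)) :=
    continuous_subtype_val.comp (continuous_ii.comp continuous_snd)
  fun_prop

lemma continuous_cW (hec : Continuous e) (hrc : Continuous r) :
    Continuous (cW e U₀ r) := by
  apply hrc.comp
  apply Continuous.subtype_mk
  exact (continuous_segE e hec).comp
    ((continuous_subtype_val.comp continuous_fst).prodMk continuous_snd)

lemma isOpen_WW (hec : Continuous e) (hU₀ : IsOpen U₀) : IsOpen (WW e U₀) := by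
  have : Continuous (fun q : (X × X) × I => segE e q.1 (q.2 : ℝ)) :=
    (continuous_segE e hec).comp (continuous_fst.prodMk (continuous_subtype_val.comp continuous_snd))
  exact isOpen_forall_compact this hU₀

variable (hre : ∀ (x : X) (h : e x ∈ U₀), r ⟨e x, h⟩ = x)

lemma segE_of_le_zero (p : X × X) {s : ℝ} (hs : s ≤ 0) : segE e p s = e p.1 := by
  unfold segE
  have : ((ii s : ℝ)) = 0 := by
    rw [ii_coe_eq, min_eq_right (by linarith), max_eq_left hs]
  rw [this]
  simp

lemma segE_of_one_le (p : X × X) {s : ℝ} (hs : 1 ≤ s) : segE e p s = e p.2 := by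
  unfold segE
  have : ((ii s : ℝ)) = 1 := by
    rw [ii_coe_eq, min_eq_left hs, max_eq_right zero_le_one]
  rw [this]
  simp

lemma segE_diag (x : X) (s : ℝ) : segE e (x, x) s = e x := by
  unfold segE
  rw [← add_smul]
  simp

lemma segE_swap (p : X × X) (s : ℝ) : segE e p.swap s = segE e p (1 - s) := by
  unfold segE
  rw [ii_one_sub_coe]
  simp only [Prod.fst_swap, Prod.snd_swap, sub_sub_cancel]
  abel

include hre in
lemma cW_of_le_zero {p : X × X} (hp : p ∈ WW e U₀) {s : ℝ} (hs : s ≤ 0) :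
    cW e U₀ r (⟨p, hp⟩, s) = p.1 := by
  unfold cW
  have h1 : (⟨segE e p s, WW_mem e U₀ hp s⟩ : U₀) = ⟨e p.1, by
      have := WW_mem e U₀ hp s; rwa [segE_of_le_zero e p hs] at this⟩ :=
    Subtype.ext (segE_of_le_zero e p hs)
  rw [h1, hre]

include hre in
lemma cW_of_one_le {p : X × X} (hp : p ∈ WW e U₀) {s : ℝ} (hs : 1 ≤ s) :
    cW e U₀ r (⟨p, hp⟩, s) = p.2 := by
  unfold cW
  have h1 : (⟨segE e p s, WW_mem e U₀ hp s⟩ : U₀) = ⟨e p.2, by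
      have := WW_mem e U₀ hp s; rwa [segE_of_one_le e p hs] at this⟩ :=
    Subtype.ext (segE_of_one_le e p hs)
  rw [h1, hre]

include hre in
lemma cW_diag {x : X} (hp : (x, x) ∈ WW e U₀) (s : ℝ) :
    cW e U₀ r (⟨(x, x), hp⟩, s) = x := by
  unfold cW
  have h1 : (⟨segE e (x, x) s, WW_mem e U₀ hp s⟩ : U₀) = ⟨e x, by
      have := WW_mem e U₀ hp s; rwa [segE_diag e x s] at this⟩ :=
    Subtype.ext (segE_diag e x s)
  rw [h1, hre]

lemma cW_swap {p : X × X} (hp : p.swap ∈ WW e U₀) (hp' : p ∈ WW e U₀) (s : ℝ) :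
    cW e U₀ r (⟨p.swap, hp⟩, s) = cW e U₀ r (⟨p, hp'⟩, 1 - s) := by
  unfold cW
  congr 1
  exact Subtype.ext (segE_swap e p s)

lemma cW_congr {p p' : X × X} (hpp : p = p') (hp : p ∈ WW e U₀) (s : ℝ) :
    cW e U₀ r (⟨p, hp⟩, s) = cW e U₀ r (⟨p', hpp ▸ hp⟩, s) := by
  subst hpp; rfl

lemma WW_diag {x : X} (hx : e x ∈ U₀) : (x, x) ∈ WW e U₀ := by
  intro t
  rw [segE_diag]
  exact hx

lemma WW_swap {p : X × X} (hp : p ∈ WW e U₀) : p.swap ∈ WW e U₀ := by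
  intro t
  rw [segE_swap]
  exact WW_mem e U₀ hp _

end Construction
section BigF
variable {X : Type*} [TopologicalSpace X] {n : ℕ}
variable (e : X → EuclideanSpace ℝ (Fin n)) (U₀ : Set (EuclideanSpace ℝ (Fin n))) (r : U₀ → X)
variable (Usec V N : Set (X × X)) (sc : C(Usec, PathSp X)) (β : X × X → ℝ)
variable (hVU : V ⊆ Usec) (hNW : N ⊆ WW e U₀)
variable (hpair : ∀ (p : X × X) (h : p ∈ Usec), p ∈ V ∪ N →
    ((sc ⟨p, h⟩ (ii (β p / 2)), sc ⟨p, h⟩ (ii (1 - β p / 2))) : X × X) ∈ WW e U₀)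

open Classical in
def bigF : ↥(V ∪ N) × I → X := fun w =>
  if h : (w.1 : X × X) ∈ Usec then
    (if ((w.2 : ℝ)) ≤ 1/3 then sc ⟨w.1, h⟩ (ii (3 * (β w.1 / 2) * (w.2 : ℝ)))
     else if ((w.2 : ℝ)) ≤ 2/3 then
       cW e U₀ r (⟨(sc ⟨w.1, h⟩ (ii (β w.1 / 2)), sc ⟨w.1, h⟩ (ii (1 - β w.1 / 2))),
         hpair w.1 h w.1.2⟩, 3 * (w.2 : ℝ) - 1)
     else sc ⟨w.1, h⟩ (ii (1 - 3 * (β w.1 / 2) * (1 - (w.2 : ℝ)))))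
  else
    (if ((w.2 : ℝ)) ≤ 1/3 then (w.1 : X × X).1
     else if ((w.2 : ℝ)) ≤ 2/3 then
       cW e U₀ r (⟨w.1, hNW (w.1.2.resolve_left (fun hv => h (hVU hv)))⟩, 3 * (w.2 : ℝ) - 1)
     else (w.1 : X × X).2)

variable (hsc : IsSymSection Usec sc)
variable (hec : Continuous e) (hrc : Continuous r)
variable (hre : ∀ (x : X) (h : e x ∈ U₀), r ⟨e x, h⟩ = x)
variable (hUo : IsOpen Usec) (hNo : IsOpen N) (hβc : Continuous β)
variable (hβN : ∀ p ∈ N, β p = 0)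

section Cont

lemma continuous_sc_eval : Continuous (fun z : ↥Usec × ℝ => sc z.1 (ii z.2)) := by
  have h1 : Continuous (ContinuousMap.uncurry sc) := (ContinuousMap.uncurry sc).continuous
  exact h1.comp (continuous_fst.prodMk (continuous_ii.comp continuous_snd))

include hsc hec hrc hre hUo hNo hβc hβN in
lemma continuous_bigF : Continuous (bigF e U₀ r Usec V N sc β hVU hNW hpair) := by
  set F := bigF e U₀ r Usec V N sc β hVU hNW hpair with hF
  have hO1 : IsOpen {w : ↥(V ∪ N) × I | (w.1 : X × X) ∈ Usec} :=
    hUo.preimage (continuous_subtype_val.comp continuous_fst)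
  have hO2 : IsOpen {w : ↥(V ∪ N) × I | (w.1 : X × X) ∈ N} :=
    hNo.preimage (continuous_subtype_val.comp continuous_fst)
  -- continuity on O₁
  have hc1 : ContinuousOn F {w : ↥(V ∪ N) × I | (w.1 : X × X) ∈ Usec} := by
    rw [continuousOn_iff_continuous_restrict]
    set O₁ := {w : ↥(V ∪ N) × I | (w.1 : X × X) ∈ Usec} with hO₁def
    have ha : Continuous (fun v : ↥O₁ => (⟨(v.1.1 : X × X), v.2⟩ : ↥Usec)) :=
      Continuous.subtype_mk
        (continuous_subtype_val.comp (continuous_fst.comp continuous_subtype_val)) _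
    have htr : Continuous (fun v : ↥O₁ => ((v.1.2 : I) : ℝ)) :=
      continuous_subtype_val.comp (continuous_snd.comp continuous_subtype_val)
    have hbb : Continuous (fun v : ↥O₁ => β (v.1.1 : X × X)) :=
      hβc.comp (continuous_subtype_val.comp (continuous_fst.comp continuous_subtype_val))
    have hev := continuous_sc_eval (Usec := Usec) (sc := sc)
    -- the three legs
    have hleg1 : Continuous (fun v : ↥O₁ =>
        sc ⟨(v.1.1 : X × X), v.2⟩ (ii (3 * (β (v.1.1 : X × X) / 2) * ((v.1.2 : I) : ℝ)))) := by
      exact hev.comp (ha.prodMk (by fun_prop))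
    have hpairc : Continuous (fun v : ↥O₁ =>
        ((sc ⟨(v.1.1 : X × X), v.2⟩ (ii (β (v.1.1 : X × X) / 2)),
          sc ⟨(v.1.1 : X × X), v.2⟩ (ii (1 - β (v.1.1 : X × X) / 2))) : X × X)) := by
      apply Continuous.prodMk
      · exact hev.comp (ha.prodMk (by fun_prop))
      · exact hev.comp (ha.prodMk (by fun_prop))
    have hmid : Continuous (fun v : ↥O₁ =>
        cW e U₀ r (⟨((sc ⟨(v.1.1 : X × X), v.2⟩ (ii (β (v.1.1 : X × X) / 2)),
          sc ⟨(v.1.1 : X × X), v.2⟩ (ii (1 - β (v.1.1 : X × X) / 2))) : X × X),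
          hpair _ v.2 v.1.1.2⟩, 3 * ((v.1.2 : I) : ℝ) - 1)) := by
      apply (continuous_cW e U₀ r hec hrc).comp
      exact (hpairc.subtype_mk _).prodMk (by fun_prop)
    have hleg3 : Continuous (fun v : ↥O₁ =>
        sc ⟨(v.1.1 : X × X), v.2⟩ (ii (1 - 3 * (β (v.1.1 : X × X) / 2) * (1 - ((v.1.2 : I) : ℝ))))) := by
      exact hev.comp (ha.prodMk (by fun_prop))
    have hinner : Continuous (fun v : ↥O₁ =>
        if ((v.1.2 : I) : ℝ) ≤ 2/3 then
          cW e U₀ r (⟨((sc ⟨(v.1.1 : X × X), v.2⟩ (ii (β (v.1.1 : X × X) / 2)),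
            sc ⟨(v.1.1 : X × X), v.2⟩ (ii (1 - β (v.1.1 : X × X) / 2))) : X × X),
            hpair _ v.2 v.1.1.2⟩, 3 * ((v.1.2 : I) : ℝ) - 1)
        else sc ⟨(v.1.1 : X × X), v.2⟩ (ii (1 - 3 * (β (v.1.1 : X × X) / 2) * (1 - ((v.1.2 : I) : ℝ))))) := by
      apply Continuous.if_le hmid hleg3 htr continuous_const
      intro v hv
      rw [cW_of_one_le e U₀ r hre _ (by rw [hv]; norm_num)]
      have harg : 1 - 3 * (β (v.1.1 : X × X) / 2) * (1 - ((v.1.2 : I) : ℝ))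
          = 1 - β (v.1.1 : X × X) / 2 := by rw [hv]; ring
      rw [harg]
    have houter : Continuous (fun v : ↥O₁ =>
        if ((v.1.2 : I) : ℝ) ≤ 1/3 then
          sc ⟨(v.1.1 : X × X), v.2⟩ (ii (3 * (β (v.1.1 : X × X) / 2) * ((v.1.2 : I) : ℝ)))
        else if ((v.1.2 : I) : ℝ) ≤ 2/3 then
          cW e U₀ r (⟨((sc ⟨(v.1.1 : X × X), v.2⟩ (ii (β (v.1.1 : X × X) / 2)),
            sc ⟨(v.1.1 : X × X), v.2⟩ (ii (1 - β (v.1.1 : X × X) / 2))) : X × X),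
            hpair _ v.2 v.1.1.2⟩, 3 * ((v.1.2 : I) : ℝ) - 1)
        else sc ⟨(v.1.1 : X × X), v.2⟩ (ii (1 - 3 * (β (v.1.1 : X × X) / 2) * (1 - ((v.1.2 : I) : ℝ))))) := by
      apply Continuous.if_le hleg1 hinner htr continuous_const
      intro v hv
      rw [if_pos (by rw [hv]; norm_num : ((v.1.2 : I) : ℝ) ≤ 2/3)]
      rw [cW_of_le_zero e U₀ r hre _ (by rw [hv]; norm_num : 3 * ((v.1.2 : I) : ℝ) - 1 ≤ 0)]
      have harg : 3 * (β (v.1.1 : X × X) / 2) * ((v.1.2 : I) : ℝ)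
          = β (v.1.1 : X × X) / 2 := by rw [hv]; ring
      rw [harg]
    have heq : O₁.restrict F = _ := rfl
    convert houter using 1
    funext v
    show F v.1 = _
    rw [hF]
    unfold bigF
    have hv : ((v : ↥(V ∪ N) × I).1 : X × X) ∈ Usec := v.2
    rw [dif_pos hv]
  have hc2 : ContinuousOn F {w : ↥(V ∪ N) × I | (w.1 : X × X) ∈ N} := by
    rw [continuousOn_iff_continuous_restrict]
    set O₂ := {w : ↥(V ∪ N) × I | (w.1 : X × X) ∈ N} with hO₂def
    have htr : Continuous (fun v : ↥O₂ => ((v.1.2 : I) : ℝ)) :=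
      continuous_subtype_val.comp (continuous_snd.comp continuous_subtype_val)
    have hval : Continuous (fun v : ↥O₂ => ((v.1.1 : X × X))) :=
      continuous_subtype_val.comp (continuous_fst.comp continuous_subtype_val)
    have hmid : Continuous (fun v : ↥O₂ =>
        cW e U₀ r (⟨((v.1.1 : X × X)), hNW v.2⟩, 3 * ((v.1.2 : I) : ℝ) - 1)) := by
      apply (continuous_cW e U₀ r hec hrc).comp
      exact (hval.subtype_mk _).prodMk (by fun_prop)
    have hG : Continuous (fun v : ↥O₂ =>
        if ((v.1.2 : I) : ℝ) ≤ 1/3 then ((v.1.1 : X × X)).1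
        else if ((v.1.2 : I) : ℝ) ≤ 2/3 then
          cW e U₀ r (⟨((v.1.1 : X × X)), hNW v.2⟩, 3 * ((v.1.2 : I) : ℝ) - 1)
        else ((v.1.1 : X × X)).2) := by
      have hinner : Continuous (fun v : ↥O₂ =>
          if ((v.1.2 : I) : ℝ) ≤ 2/3 then
            cW e U₀ r (⟨((v.1.1 : X × X)), hNW v.2⟩, 3 * ((v.1.2 : I) : ℝ) - 1)
          else ((v.1.1 : X × X)).2) := by
        apply Continuous.if_le hmid (continuous_snd.comp hval) htr continuous_const
        intro v hv
        exact cW_of_one_le e U₀ r hre _ (by rw [hv]; norm_num)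
      apply Continuous.if_le (continuous_fst.comp hval) hinner htr continuous_const
      intro v hv
      rw [if_pos (by rw [hv]; norm_num : ((v.1.2 : I) : ℝ) ≤ 2/3)]
      exact (cW_of_le_zero e U₀ r hre _ (by rw [hv]; norm_num : 3 * ((v.1.2 : I) : ℝ) - 1 ≤ 0)).symm
    convert hG using 1
    funext v
    show F v.1 = _
    rw [hF]
    unfold bigF
    by_cases h : ((v : ↥(V ∪ N) × I).1 : X × X) ∈ Usec
    · rw [dif_pos h]
      have hb : β ((v : ↥(V ∪ N) × I).1 : X × X) = 0 := hβN _ v.2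
      split_ifs with h1 h2
      · rw [hb, show (3 : ℝ) * (0 / 2) * (((v : ↥(V ∪ N) × I).2 : I) : ℝ) = 0 by ring, ii_zero]
        exact (hsc.1 ⟨_, h⟩).1
      · congr 1
        refine Prod.ext (Subtype.ext ?_) rfl
        show (_, _) = ((v : ↥(V ∪ N) × I).1 : X × X)
        rw [hb, show (0 : ℝ) / 2 = 0 by ring, ii_zero,
          show (1 : ℝ) - 0 = 1 by ring, ii_one]
        rw [(hsc.1 ⟨_, h⟩).1, (hsc.1 ⟨_, h⟩).2]
      · rw [hb, show (1 : ℝ) - 3 * (0 / 2) * (1 - (((v : ↥(V ∪ N) × I).2 : I) : ℝ)) = 1 by ring,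
          ii_one]
        exact (hsc.1 ⟨_, h⟩).2
    · rw [dif_neg h]
  rw [continuous_iff_continuousAt]
  intro w
  rcases (w.1.2 : (w.1 : X × X) ∈ V ∪ N) with hv | hn
  · exact hc1.continuousAt (hO1.mem_nhds (hVU hv))
  · exact hc2.continuousAt (hO2.mem_nhds hn)

include hsc in
lemma bigF_zero (q : ↥(V ∪ N)) :
    bigF e U₀ r Usec V N sc β hVU hNW hpair (q, 0) = (q : X × X).1 := by
  unfold bigF
  have h0 : (((0 : I) : ℝ)) = 0 := rfl
  by_cases h : (q : X × X) ∈ Usec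
  · rw [dif_pos h]
    rw [if_pos (by rw [h0]; norm_num)]
    rw [h0, show (3 : ℝ) * (β (q : X × X) / 2) * 0 = 0 by ring, ii_zero]
    exact (hsc.1 ⟨_, h⟩).1
  · rw [dif_neg h]
    rw [if_pos (by rw [h0]; norm_num)]

include hsc in
lemma bigF_one (q : ↥(V ∪ N)) :
    bigF e U₀ r Usec V N sc β hVU hNW hpair (q, 1) = (q : X × X).2 := by
  unfold bigF
  have h0 : (((1 : I) : ℝ)) = 1 := rfl
  by_cases h : (q : X × X) ∈ Usec
  · rw [dif_pos h]
    rw [if_neg (by rw [h0]; norm_num), if_neg (by rw [h0]; norm_num)]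
    rw [h0, show (1 : ℝ) - 3 * (β (q : X × X) / 2) * (1 - 1) = 1 by ring, ii_one]
    exact (hsc.1 ⟨_, h⟩).2
  · rw [dif_neg h]
    rw [if_neg (by rw [h0]; norm_num), if_neg (by rw [h0]; norm_num)]

include hsc hre in
lemma bigF_diag (hβΔ : ∀ x : X, β (x, x) = 0) (x : X)
    (hx : ((x, x) : X × X) ∈ V ∪ N) (t : I) :
    bigF e U₀ r Usec V N sc β hVU hNW hpair (⟨(x, x), hx⟩, t) = x := by
  unfold bigF
  by_cases h : ((x, x) : X × X) ∈ Usec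
  · rw [dif_pos h]
    have hb := hβΔ x
    split_ifs with h1 h2
    · rw [show β ((⟨(x,x),hx⟩ : ↥(V ∪ N)) : X × X) = 0 from hb,
        show (3 : ℝ) * (0 / 2) * ((t : I) : ℝ) = 0 by ring, ii_zero]
      exact (hsc.1 ⟨_, h⟩).1
    · have hpp : ((sc ⟨((⟨(x,x),hx⟩ : ↥(V ∪ N)) : X × X), h⟩ (ii (β ((⟨(x,x),hx⟩ : ↥(V ∪ N)) : X × X) / 2)),
          sc ⟨_, h⟩ (ii (1 - β ((⟨(x,x),hx⟩ : ↥(V ∪ N)) : X × X) / 2))) : X × X) = (x, x) := by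
        rw [show β ((⟨(x,x),hx⟩ : ↥(V ∪ N)) : X × X) = 0 from hb]
        rw [show (0 : ℝ) / 2 = 0 by ring, ii_zero, show (1 : ℝ) - 0 = 1 by ring, ii_one]
        refine Prod.ext ?_ ?_
        · exact (hsc.1 ⟨_, h⟩).1
        · exact (hsc.1 ⟨_, h⟩).2
      rw [show (⟨_, hpair _ h hx⟩ : ↥(WW e U₀)) = ⟨(x, x), by rw [← hpp]; exact hpair _ h hx⟩
        from Subtype.ext hpp]
      exact cW_diag e U₀ r hre _ _
    · rw [show β ((⟨(x,x),hx⟩ : ↥(V ∪ N)) : X × X) = 0 from hb,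
        show (1 : ℝ) - 3 * (0 / 2) * (1 - ((t : I) : ℝ)) = 1 by ring, ii_one]
      exact (hsc.1 ⟨_, h⟩).2
  · rw [dif_neg h]
    split_ifs with h1 h2
    · rfl
    · exact cW_diag e U₀ r hre _ _
    · rfl

include hsc hre in
lemma bigF_symm (hUsw : ∀ p ∈ Usec, Prod.swap p ∈ Usec) (hβsw : ∀ p, β (Prod.swap p) = β p)
    (q : ↥(V ∪ N)) (hs : Prod.swap (q : X × X) ∈ V ∪ N) (t : I) :
    bigF e U₀ r Usec V N sc β hVU hNW hpair (⟨Prod.swap (q : X × X), hs⟩, t)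
      = bigF e U₀ r Usec V N sc β hVU hNW hpair (q, unitInterval.symm t) := by
  obtain ⟨p, hqV⟩ := q
  have htsymm : ((unitInterval.symm t : I) : ℝ) = 1 - ((t : I) : ℝ) := unitInterval.coe_symm_eq t
  unfold bigF
  by_cases h : p ∈ Usec
  · have hsw : Prod.swap p ∈ Usec := hUsw p h
    rw [dif_pos hsw, dif_pos h]
    have hkey : ∀ s : ℝ, sc ⟨Prod.swap p, hsw⟩ (ii s) = sc ⟨p, h⟩ (ii (1 - s)) := by
      intro s
      rw [ii_symm]
      exact hsc.2 ⟨p, h⟩ hsw (ii s)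
    have hβ : β (Prod.swap p) = β p := hβsw p
    simp only [htsymm, hβ]
    set tr := ((t : I) : ℝ) with htr
    have hpairP : ((sc ⟨Prod.swap p, hsw⟩ (ii (β p / 2)),
        sc ⟨Prod.swap p, hsw⟩ (ii (1 - β p / 2))) : X × X)
        = Prod.swap ((sc ⟨p, h⟩ (ii (β p / 2)), sc ⟨p, h⟩ (ii (1 - β p / 2))) : X × X) := by
      refine Prod.ext ?_ ?_
      · exact hkey (β p / 2)
      · rw [hkey (1 - β p / 2), show (1 : ℝ) - (1 - β p / 2) = β p / 2 by ring]
        rfl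
    split_ifs with h1 h2 h3 h4 h5 h6 h7
    · exfalso; linarith
    · -- tr = 1/3, RHS middle
      have ht3 : tr = 1/3 := by linarith
      rw [hkey, cW_of_one_le e U₀ r hre _ (by rw [ht3]; norm_num)]
      rw [show (1 : ℝ) - 3 * (β p / 2) * tr = 1 - β p / 2 by rw [ht3]; ring]
    · -- tr < 1/3, RHS leg3
      rw [hkey]
      rw [show (1 : ℝ) - 3 * (β p / 2) * (1 - (1 - tr)) = 1 - 3 * (β p / 2) * tr by ring]
    · -- tr = 2/3 exactly, LHS middle RHS leg1
      have ht3 : tr = 2/3 := by linarith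
      rw [cW_congr e U₀ r hpairP]
      rw [cW_of_one_le e U₀ r hre _ (by rw [ht3]; norm_num)]
      rw [show (3 : ℝ) * (β p / 2) * (1 - tr) = β p / 2 by rw [ht3]; ring]
      rfl
    · -- both middle
      rw [cW_congr e U₀ r hpairP]
      rw [cW_swap e U₀ r _ (hpair p h hqV) _]
      rw [show (1 : ℝ) - (3 * tr - 1) = 3 * (1 - tr) - 1 by ring]
    · exfalso; linarith
    · -- tr > 2/3, RHS leg1
      rw [hkey]
      rw [show (1 : ℝ) - (1 - 3 * (β p / 2) * (1 - tr)) = 3 * (β p / 2) * (1 - tr) by ring]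
    · exfalso; linarith
    · exfalso; linarith
  · have hsw : Prod.swap p ∉ Usec := fun hc => h (by
      have := hUsw _ hc
      rwa [Prod.swap_swap] at this)
    rw [dif_neg hsw, dif_neg h]
    simp only [htsymm]
    set tr := ((t : I) : ℝ) with htr
    split_ifs with h1 h2 h3 h4 h5 h6 h7
    · exfalso; linarith
    · have ht3 : tr = 1/3 := by linarith
      rw [cW_of_one_le e U₀ r hre _ (by rw [ht3]; norm_num)]
      rfl
    · rfl
    · have ht3 : tr = 2/3 := by linarith
      rw [cW_of_one_le e U₀ r hre _ (by rw [ht3]; norm_num)]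
      rfl
    · rw [cW_swap e U₀ r _ (hNW (hqV.resolve_left (fun hv => h (hVU hv)))) _]
      rw [show (1 : ℝ) - (3 * tr - 1) = 3 * (1 - tr) - 1 by ring]
    · exfalso; linarith
    · rfl
    · exfalso; linarith
    · exfalso; linarith

end Cont
end BigF
section Wtwo
variable {X : Type*} [TopologicalSpace X] {n : ℕ}
variable (e : X → EuclideanSpace ℝ (Fin n)) (U₀ : Set (EuclideanSpace ℝ (Fin n)))
variable (Usec : Set (X × X)) (sc : C(Usec, PathSp X))

def Wtwo : Set (X × X) :=
  Subtype.val '' {u : ↥Usec | ∀ t : I,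
    ((sc u t, sc u (unitInterval.symm t)) : X × X) ∈ WW e U₀}

lemma Wtwo_subset : Wtwo e U₀ Usec sc ⊆ Usec := by
  rintro p ⟨u, _, rfl⟩
  exact u.2

lemma mem_Wtwo {p : X × X} (h : p ∈ Usec)
    (hp : ∀ t : I, ((sc ⟨p, h⟩ t, sc ⟨p, h⟩ (unitInterval.symm t)) : X × X) ∈ WW e U₀) :
    p ∈ Wtwo e U₀ Usec sc := ⟨⟨p, h⟩, hp, rfl⟩

lemma of_mem_Wtwo {p : X × X} (hp : p ∈ Wtwo e U₀ Usec sc) (h : p ∈ Usec) (t : I) :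
    ((sc ⟨p, h⟩ t, sc ⟨p, h⟩ (unitInterval.symm t)) : X × X) ∈ WW e U₀ := by
  obtain ⟨u, hu, huv⟩ := hp
  have : u = ⟨p, h⟩ := Subtype.ext huv
  rw [← this]
  exact hu t

lemma isOpen_Wtwo (hUo : IsOpen Usec) (hec : Continuous e) (hU₀ : IsOpen U₀) :
    IsOpen (Wtwo e U₀ Usec sc) := by
  apply hUo.isOpenMap_subtype_val
  have hQ : Continuous (fun w : ↥Usec × I =>
      ((sc w.1 w.2, sc w.1 (unitInterval.symm w.2)) : X × X)) := by
    have h1 : Continuous (ContinuousMap.uncurry sc) := (ContinuousMap.uncurry sc).continuous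
    exact (h1.comp (continuous_fst.prodMk continuous_snd)).prodMk
      (h1.comp (continuous_fst.prodMk (unitInterval.continuous_symm.comp continuous_snd)))
  exact isOpen_forall_compact hQ (isOpen_WW e U₀ hec hU₀)
end Wtwo
theorem TCSigma_le.tcm {X : Type*} [TopologicalSpace X] (hX : IsENR X) {k : ℕ}
    (h : TCSigma_le X k) : TCMSigma_le X k := by
  classical
  obtain ⟨n, e, U₀, he, hU₀, hrange, r, hrc, hre⟩ := hX
  obtain ⟨U, hUo, hUsw, hUcov, hUsec⟩ := h
  choose sc hsc using hUsec
  haveI : TopologicalSpace.MetrizableSpace X := he.metrizableSpace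
  letI : MetricSpace X := TopologicalSpace.metrizableSpaceMetric X
  have hec : Continuous e := he.continuous
  have hswc : Continuous (Prod.swap : X × X → X × X) := continuous_swap
  set W := WW e U₀ with hW
  have hWo : IsOpen W := isOpen_WW e U₀ hec hU₀
  have hΔW : ∀ x : X, (x, x) ∈ W := fun x => WW_diag e U₀ (hrange ⟨x, rfl⟩)
  -- shrinking the cover
  obtain ⟨V₀, hV₀cov, hV₀o, hV₀cl⟩ :=
    exists_subset_iUnion_closure_subset isClosed_univ hUo
      (fun x _ => Set.toFinite _) (by rw [hUcov])
  set V : Fin (k+1) → Set (X × X) := fun i => V₀ i ∪ Prod.swap ⁻¹' (V₀ i) with hV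
  have hVo : ∀ i, IsOpen (V i) := fun i => (hV₀o i).union ((hV₀o i).preimage hswc)
  have hVcl : ∀ i, closure (V i) ⊆ U i := by
    intro i
    rw [closure_union]
    apply union_subset (hV₀cl i)
    refine subset_trans (hswc.closure_preimage_subset _) ?_
    intro p hp
    have h2 : Prod.swap p ∈ U i := hV₀cl i hp
    have := hUsw i _ h2
    rwa [Prod.swap_swap] at this
  have hVU : ∀ i, V i ⊆ U i := fun i => subset_closure.trans (hVcl i)
  have hVsw : ∀ i, ∀ p ∈ V i, Prod.swap p ∈ V i := by
    intro i p hp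
    rcases hp with h1 | h1
    · exact Or.inr (by rwa [mem_preimage, Prod.swap_swap])
    · exact Or.inl h1
  -- the good set W₂
  set W₂ : Fin (k+1) → Set (X × X) := fun i => Wtwo e U₀ (U i) (sc i) with hW₂
  have hW₂o : ∀ i, IsOpen (W₂ i) := fun i => isOpen_Wtwo e U₀ (U i) (sc i) (hUo i) hec hU₀
  have hΔW₂ : ∀ i x, (((x, x) : X × X) ∈ U i) → ((x, x) : X × X) ∈ W₂ i := by
    intro i x hx
    apply mem_Wtwo e U₀ (U i) (sc i) hx
    intro t
    have hsymm : sc i ⟨(x, x), hx⟩ (unitInterval.symm t) = sc i ⟨(x, x), hx⟩ t := by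
      have := (hsc i).2 ⟨(x, x), hx⟩ hx t
      exact this.symm
    rw [hsymm]
    exact hΔW _
  -- the bad closed sets
  set B : Fin (k+1) → Set (X × X) := fun i => closure (V i \ W₂ i) with hB
  have hBc : ∀ i, IsClosed (B i) := fun i => isClosed_closure
  have hΔB : ∀ i x, ((x, x) : X × X) ∉ B i := by
    intro i x hx
    have hxU : ((x, x) : X × X) ∈ U i := hVcl i (closure_mono diff_subset hx)
    have hxW₂ : ((x, x) : X × X) ∈ W₂ i := hΔW₂ i x hxU
    obtain ⟨y, hy1, hy2⟩ := mem_closure_iff.1 hx (W₂ i) (hW₂o i) hxW₂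
    exact hy2.2 hy1
  -- invariant neighbourhood of the diagonal
  set NΔ := W \ ⋃ i, B i with hNΔ
  have hNΔo : IsOpen NΔ := hWo.sdiff (isClosed_iUnion_of_finite hBc)
  have hΔNΔ : Set.diagonal X ⊆ NΔ := by
    rintro ⟨a, b⟩ hab
    have : a = b := hab
    subst this
    exact ⟨hΔW a, by simpa using fun i => hΔB i a⟩
  obtain ⟨N₂', hN₂'o, hΔN₂', hN₂'cl⟩ :=
    normal_exists_closure_subset isClosed_diagonal hNΔo hΔNΔ
  set N := N₂' ∩ Prod.swap ⁻¹' N₂' with hNdef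
  have hNo : IsOpen N := hN₂'o.inter (hN₂'o.preimage hswc)
  have hΔN : ∀ x : X, ((x, x) : X × X) ∈ N := by
    intro x
    constructor
    · exact hΔN₂' rfl
    · rw [mem_preimage]
      exact hΔN₂' rfl
  have hNsw : ∀ p ∈ N, Prod.swap p ∈ N := by
    rintro p ⟨h1, h2⟩
    exact ⟨h2, by rwa [mem_preimage, Prod.swap_swap]⟩
  have hNcl : closure N ⊆ NΔ := (closure_mono inter_subset_left).trans hN₂'cl
  have hNW : N ⊆ W := fun p hp => (hNcl (subset_closure hp)).1
  -- Urysohn functions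
  have hdisj : ∀ i, Disjoint (closure N) (B i) := by
    intro i
    rw [Set.disjoint_left]
    intro p hp hpB
    exact (hNcl hp).2 (mem_iUnion.2 ⟨i, hpB⟩)
  choose f hf0 hf1 hf01 using fun i =>
    exists_continuous_zero_one_of_isClosed isClosed_closure (hBc i) (hdisj i)
  set β : Fin (k+1) → (X × X) → ℝ := fun i p => max (f i p) (f i (Prod.swap p)) with hβ
  have hβc : ∀ i, Continuous (β i) := fun i =>
    ((f i).continuous).max ((f i).continuous.comp hswc)
  have hβsw : ∀ i p, β i (Prod.swap p) = β i p := by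
    intro i p
    simp only [hβ, Prod.swap_swap]
    exact max_comm _ _
  have hβN : ∀ i, ∀ p ∈ N, β i p = 0 := by
    intro i p hp
    have h1 : f i p = 0 := hf0 i (subset_closure hp)
    have h2 : f i (Prod.swap p) = 0 := hf0 i (subset_closure (hNsw p hp))
    simp [hβ, h1, h2]
  have hβB : ∀ i, ∀ p ∈ B i, β i p = 1 := by
    intro i p hp
    have h1 : f i p = 1 := hf1 i hp
    simp only [hβ, h1]
    exact max_eq_left (hf01 i (Prod.swap p)).2
  have hβΔ : ∀ i x, β i ((x, x) : X × X) = 0 := fun i x => hβN i _ (hΔN x)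
  -- the key membership
  have hNW' : ∀ i : Fin (k+1), N ⊆ WW e U₀ := fun i => hNW
  have hpair : ∀ i (p : X × X) (hpu : p ∈ U i), p ∈ V i ∪ N →
      ((sc i ⟨p, hpu⟩ (ii (β i p / 2)), sc i ⟨p, hpu⟩ (ii (1 - β i p / 2))) : X × X)
        ∈ WW e U₀ := by
    intro i p hpu hp
    have hii : ii (1 - β i p / 2) = unitInterval.symm (ii (β i p / 2)) := ii_symm _
    by_cases hw2 : p ∈ W₂ i
    · rw [hii]
      exact of_mem_Wtwo e U₀ (U i) (sc i) hw2 hpu (ii (β i p / 2))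
    · rcases hp with hv | hn
      · have hb : β i p = 1 := hβB i p (subset_closure ⟨hv, hw2⟩)
        rw [hii, hb]
        have h12 : unitInterval.symm (ii ((1 : ℝ) / 2)) = ii ((1 : ℝ) / 2) := by
          rw [← ii_symm]
          norm_num
        rw [h12]
        exact hΔW _
      · have hb : β i p = 0 := hβN i p hn
        rw [hb, show (0 : ℝ) / 2 = 0 by ring, ii_zero, show (1 : ℝ) - 0 = 1 by ring, ii_one]
        rw [((hsc i).1 ⟨p, hpu⟩).1, ((hsc i).1 ⟨p, hpu⟩).2]
        exact hNW hn
  -- assemble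
  refine ⟨fun i => V i ∪ N, fun i => (hVo i).union hNo, ?_, ?_, ?_, ?_⟩
  · intro i p hp
    rcases hp with h1 | h1
    · exact Or.inl (hVsw i p h1)
    · exact Or.inr (hNsw p h1)
  · intro i x
    exact Or.inr (hΔN x)
  · apply eq_univ_of_univ_subset
    refine subset_trans hV₀cov (iUnion_mono fun i => ?_)
    exact subset_trans (subset_union_left : V₀ i ⊆ V i) (subset_union_left : V i ⊆ V i ∪ N)
  · intro i
    have hFc : Continuous (bigF e U₀ r (U i) (V i) N (sc i) (β i)
        (hVU i) (hNW' i) (hpair i)) :=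
      continuous_bigF e U₀ r (U i) (V i) N (sc i) (β i) (hVU i) (hNW' i) (hpair i)
        (hsc i) hec hrc hre (hUo i) hNo (hβc i) (hβN i)
    refine ⟨(ContinuousMap.curry ⟨_, hFc⟩), ⟨?_, ?_⟩, ?_⟩
    · intro u
      exact ⟨bigF_zero e U₀ r (U i) (V i) N (sc i) (β i) (hVU i) (hNW' i) (hpair i) (hsc i) u,
        bigF_one e U₀ r (U i) (V i) N (sc i) (β i) (hVU i) (hNW' i) (hpair i) (hsc i) u⟩
    · intro u hs t
      exact bigF_symm e U₀ r (U i) (V i) N (sc i) (β i) (hVU i) (hNW' i) (hpair i) (hsc i)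
        hre (hUsw i) (hβsw i) u hs t
    · intro x hx t
      exact bigF_diag e U₀ r (U i) (V i) N (sc i) (β i) (hVU i) (hNW' i) (hpair i) (hsc i)
        hre (hβΔ i) x hx t
theorem TCMSigma_le.tc {X : Type*} [TopologicalSpace X] {k : ℕ} (h : TCMSigma_le X k) :
    TCSigma_le X k := by
  obtain ⟨U, h1, h2, h3, h4, h5⟩ := h
  exact ⟨U, h1, h2, h4, fun i => (h5 i).imp fun sec hs => hs.1⟩

/-- For a paracompact ENR `X`, the monoidal symmetrized topological
complexity coincides with the symmetrized topological complexity. -/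
theorem tcmSigma_eq_tcSigma (X : Type*) [TopologicalSpace X] [ParacompactSpace X]
    (hX : IsENR X) : TCMSigma X = TCSigma X := by
  have hiff : ∀ k : ℕ, TCMSigma_le X k ↔ TCSigma_le X k :=
    fun k => ⟨TCMSigma_le.tc, fun h => h.tcm hX⟩
  unfold TCMSigma TCSigma
  congr 1
  ext m
  simp only [mem_setOf_eq, hiff]
end
end

section
/- The symmetric square of the circle, $SP^2(S^1) = (S^1 \times S^1)/\mathbb{Z}/2$ with the transposition involution, is homeomorphic to the compact Möbius band $M$, via a homeomorphism of pairs carrying the image of the diagonal $dS^1$ onto the boundary circle $\partial M$. -/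
open unitInterval Set

noncomputable section

/-! ### The symmetric square -/

/-- The symmetric square `SP²(X) = (X × X)/(ℤ/2)`, the orbit space of the transposition. -/
def SP2 (X : Type*) [TopologicalSpace X] : Type _ :=
  Quot (fun a b : X × X => a = b ∨ a = Prod.swap b)

instance SP2.instTop (X : Type*) [TopologicalSpace X] : TopologicalSpace (SP2 X) :=
  instTopologicalSpaceQuot

/-- The orbit projection `X × X → SP²(X)`. -/
def sp2mk {X : Type*} [TopologicalSpace X] (p : X × X) : SP2 X :=
  Quot.mk _ p

/-- The image `dX ⊆ SP²(X)` of the diagonal. -/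
def sp2diag (X : Type*) [TopologicalSpace X] : Set (SP2 X) :=
  Set.range fun x : X => sp2mk (x, x)

/-- The Möbius band, as the quotient of the unit square identifying `(0,t) ~ (1,1-t)`. -/
def Moebius : Type :=
  Quot (fun a b : I × I => a = b ∨
    (a.1 = 0 ∧ b.1 = 1 ∧ b.2 = unitInterval.symm a.2) ∨
    (a.1 = 1 ∧ b.1 = 0 ∧ b.2 = unitInterval.symm a.2))

instance : TopologicalSpace Moebius := instTopologicalSpaceQuot

/-- The boundary circle of the Möbius band: the image of `I × {0,1}`. -/
def moebiusBoundary : Set Moebius :=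
  {x | ∃ p : I × I, (p.2 = 0 ∨ p.2 = 1) ∧ Quot.mk _ p = x}

/-!
Parametrize the band by `(s, t) ↦ {e^{iπ(s+t)}, e^{iπ(s-t)}}`: the gluing `(0, t) ~ (1, 1 - t)`
only swaps the two points, and the edges `t = 0, 1` go to coincident pairs. Surjectivity: write
`z = e^{iπa}`, `w = e^{iπb}` with `a, b ∈ (-1, 1]` and solve `s + t = a`, `s - t = b`. Injectivity
is read off the symmetric functions `z + w = 2 cos(πt) e^{iπs}` and `z w = e^{2πis}` of the pair,
which also embed `SP²(S¹)` in `ℂ²`, so that it is Hausdorff; a continuous bijection from the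
compact band is then a homeomorphism.
-/

open Real Metric Function

section SymmetricSquare

variable {X : Type*} [TopologicalSpace X]

theorem sp2mk_swap (p : X × X) : sp2mk p.swap = sp2mk p :=
  Quot.sound (Or.inr rfl)

theorem continuous_sp2mk : Continuous (sp2mk : X × X → SP2 X) :=
  continuous_quot_mk

variable {R : Type*} [CommRing R] [TopologicalSpace R]

def SP2.vieta (X : Set R) : SP2 X → R × R :=
  Quot.lift (fun p => ((p.1 : R) + p.2, (p.1 : R) * p.2)) <| by
    rintro p _ (rfl | rfl)
    · rfl
    · exact Prod.ext (add_comm _ _) (mul_comm _ _)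

theorem SP2.vieta_sp2mk (X : Set R) (p : X × X) :
    SP2.vieta X (sp2mk p) = ((p.1 : R) + p.2, (p.1 : R) * p.2) :=
  rfl

theorem SP2.continuous_vieta [ContinuousAdd R] [ContinuousMul R] (X : Set R) :
    Continuous (SP2.vieta X) :=
  continuous_quot_lift _ (by fun_prop)

theorem SP2.vieta_injective [IsDomain R] (X : Set R) : Injective (SP2.vieta X) := by
  intro a b h
  induction a using Quot.ind with | _ p => ?_
  induction b using Quot.ind with | _ q => ?_
  obtain ⟨x, y⟩ := p
  obtain ⟨x', y'⟩ := q
  have hsum : (x : R) + y = x' + y' := congrArg Prod.fst h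
  have hprod : (x : R) * y = x' * y' := congrArg Prod.snd h
  have hroot : ((x : R) - x') * (x - y') = 0 := by linear_combination x * hsum - hprod
  refine Quot.sound ?_
  rcases mul_eq_zero.mp hroot with hx | hx
  · have hx : (x : R) = x' := sub_eq_zero.mp hx
    exact Or.inl (Prod.ext (Subtype.ext hx) (Subtype.ext (by linear_combination hsum - hx)))
  · have hx : (x : R) = y' := sub_eq_zero.mp hx
    have hy : (y : R) = x' := by linear_combination hsum - hx
    exact Or.inr (Prod.ext (Subtype.ext hx) (Subtype.ext hy))

instance [ContinuousAdd R] [ContinuousMul R] [IsDomain R] [T2Space R] (X : Set R) :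
    T2Space (SP2 X) :=
  .of_injective_continuous (SP2.vieta_injective X) (SP2.continuous_vieta X)

end SymmetricSquare

def expPi (x : ℝ) : sphere (0 : ℂ) 1 :=
  ⟨Complex.exp (↑(π * x) * Complex.I), by
    rw [mem_sphere_zero_iff_norm]; exact Complex.norm_exp_ofReal_mul_I _⟩

theorem continuous_expPi : Continuous expPi :=
  Continuous.subtype_mk (by fun_prop) _

theorem expPi_add_two (x : ℝ) : expPi (x + 2) = expPi x := by
  refine Subtype.ext ?_
  have hperiod :
      (↑(π * (x + 2)) : ℂ) * Complex.I = ↑(π * x) * Complex.I + 2 * π * Complex.I := by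
    push_cast; ring
  simp only [expPi]
  rw [hperiod, Complex.exp_add, Complex.exp_two_pi_mul_I, mul_one]

theorem expPi_arg_div_pi (z : sphere (0 : ℂ) 1) : expPi (Complex.arg z / π) = z := by
  refine Subtype.ext ?_
  have hz : ‖(z : ℂ)‖ = 1 := by simp
  simpa [expPi, mul_div_cancel₀ _ pi_ne_zero, hz] using Complex.norm_mul_exp_arg_mul_I (z : ℂ)

theorem arg_div_pi_mem_Ioc (z : ℂ) : Complex.arg z / π ∈ Ioc (-1) 1 := by
  constructor
  · rw [lt_div_iff₀ pi_pos]
    linarith [Complex.neg_pi_lt_arg z]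
  · rw [div_le_one pi_pos]
    exact Complex.arg_le_pi z

theorem injective_cos_pi_mul : Injective fun t : I => Real.cos (π * t) := by
  intro t t' h
  have hmem (u : I) : π * u ∈ Icc 0 π :=
    ⟨by nlinarith [pi_pos, u.2.1], by nlinarith [pi_pos, u.2.2]⟩
  exact Subtype.ext (mul_left_cancel₀ pi_ne_zero (injOn_cos (hmem t) (hmem t') h))

theorem exists_int_eq_add_of_exp_two_pi_eq {x y : ℝ}
    (h : Complex.exp (↑(2 * π * x) * Complex.I) = Complex.exp (↑(2 * π * y) * Complex.I)) :
    ∃ n : ℤ, x = y + n := by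
  obtain ⟨n, hn⟩ := Complex.exp_eq_exp_iff_exists_int.mp h
  have hre : ((2 * π * x : ℝ) : ℂ) = ((2 * π * (y + n) : ℝ) : ℂ) :=
    mul_right_cancel₀ Complex.I_ne_zero (by push_cast at hn ⊢; linear_combination hn)
  exact ⟨n, mul_left_cancel₀ two_pi_pos.ne' (Complex.ofReal_injective hre)⟩

theorem eq_or_eq_one_and_eq_zero_of_exp_two_pi_eq {s s' : I} (hss : (s' : ℝ) ≤ s)
    (h : Complex.exp (↑(2 * π * s) * Complex.I) = Complex.exp (↑(2 * π * s') * Complex.I)) :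
    s = s' ∨ s = 1 ∧ s' = 0 := by
  obtain ⟨n, hn⟩ := exists_int_eq_add_of_exp_two_pi_eq h
  have hn0 : 0 ≤ n := by exact_mod_cast (by linarith : (0 : ℝ) ≤ n)
  have hn1 : n ≤ 1 := by exact_mod_cast (by linarith [s.2.2, s'.2.1] : (n : ℝ) ≤ 1)
  obtain rfl | rfl : n = 0 ∨ n = 1 := by omega
  · exact Or.inl (Subtype.ext (by simpa using hn))
  · push_cast at hn
    exact Or.inr ⟨Icc.coe_eq_one.mp (by linarith [s.2.2, s'.2.1]),
      Icc.coe_eq_zero.mp (by linarith [s.2.2, s'.2.1])⟩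

def bandMap (s t : ℝ) : sphere (0 : ℂ) 1 × sphere (0 : ℂ) 1 :=
  (expPi (s + t), expPi (s - t))

theorem bandMap_add_one_one_sub (s t : ℝ) : bandMap (s + 1) (1 - t) = (bandMap s t).swap := by
  rw [bandMap, bandMap, Prod.swap_prod_mk, ← expPi_add_two (s - t)]
  congr 2 <;> ring

theorem bandMap_zero (s : ℝ) : bandMap s 0 = (expPi s, expPi s) := by
  simp [bandMap]

theorem bandMap_one (s : ℝ) : bandMap s 1 = (expPi (s + 1), expPi (s + 1)) := by
  rw [bandMap, ← expPi_add_two (s - 1)]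
  congr 2; ring

theorem vieta_sp2mk_bandMap (s t : ℝ) :
    SP2.vieta _ (sp2mk (bandMap s t)) =
      (↑(2 * Real.cos (π * t)) * Complex.exp (↑(π * s) * Complex.I),
        Complex.exp (↑(2 * π * s) * Complex.I)) := by
  simp only [SP2.vieta_sp2mk, bandMap, expPi, ← Complex.exp_add]
  refine Prod.ext ?_ ?_
  · push_cast
    rw [Complex.two_cos, add_mul, ← Complex.exp_add, ← Complex.exp_add]
    ring_nf
  · push_cast
    ring_nf

theorem sp2mk_bandMap_one_one_sub (t : ℝ) : sp2mk (bandMap 1 (1 - t)) = sp2mk (bandMap 0 t) := by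
  have h := bandMap_add_one_one_sub 0 t
  rw [zero_add] at h
  rw [h, sp2mk_swap]

instance : CompactSpace Moebius :=
  Quot.compactSpace

def moebiusToSP2 : Moebius → SP2 (sphere (0 : ℂ) 1) :=
  Quot.lift (fun p => sp2mk (bandMap p.1 p.2)) <| by
    rintro ⟨s, t⟩ ⟨s', t'⟩ (h | ⟨rfl, rfl, rfl⟩ | ⟨rfl, rfl, rfl⟩)
    · rw [h]
    · simpa using (sp2mk_bandMap_one_one_sub t).symm
    · simpa using sp2mk_bandMap_one_one_sub (1 - t)

theorem moebiusToSP2_mk (p : I × I) :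
    moebiusToSP2 (Quot.mk _ p) = sp2mk (bandMap p.1 p.2) :=
  rfl

theorem continuous_moebiusToSP2 : Continuous moebiusToSP2 :=
  continuous_quot_lift _ <| continuous_sp2mk.comp <|
    (continuous_expPi.comp (by fun_prop)).prodMk (continuous_expPi.comp (by fun_prop))

/-- Every point of the strip `(-1, 1] × [0, 1]` is equivalent to one in the unit square. -/
theorem exists_sp2mk_bandMap_eq {s : ℝ} (hs : s ∈ Ioc (-1) 1) (t : I) :
    ∃ p : I × I, (p.2 = t ∨ p.2 = σ t) ∧ sp2mk (bandMap p.1 p.2) = sp2mk (bandMap s t) := by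
  by_cases h : 0 ≤ s
  · exact ⟨(⟨s, h, hs.2⟩, t), Or.inl rfl, rfl⟩
  · refine ⟨(⟨s + 1, by linarith [hs.1], by linarith⟩, σ t), Or.inr rfl, ?_⟩
    rw [coe_symm_eq, bandMap_add_one_one_sub, sp2mk_swap]

theorem moebiusToSP2_surjective : Surjective moebiusToSP2 := by
  intro x
  induction x using Quot.ind with | _ p => ?_
  obtain ⟨z, w⟩ := p
  wlog hzw : Complex.arg w ≤ Complex.arg z generalizing z w
  · obtain ⟨y, hy⟩ := this w z (le_of_not_ge hzw)
    exact ⟨y, hy.trans (sp2mk_swap (z, w))⟩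
  set a := Complex.arg z / π
  set b := Complex.arg w / π
  have ha := arg_div_pi_mem_Ioc z
  have hb := arg_div_pi_mem_Ioc w
  have hab : b ≤ a := div_le_div_of_nonneg_right hzw pi_pos.le
  have hbandMap : bandMap ((a + b) / 2) ((a - b) / 2) = (z, w) := by
    rw [bandMap, ← expPi_arg_div_pi z, ← expPi_arg_div_pi w]
    congr 2 <;> ring
  obtain ⟨p, -, hp⟩ := exists_sp2mk_bandMap_eq (s := (a + b) / 2)
    ⟨by linarith [ha.1, hb.1], by linarith [ha.2, hb.2]⟩
    ⟨(a - b) / 2, by linarith, by linarith [ha.2, hb.1]⟩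
  exact ⟨Quot.mk _ p, hp.trans (congrArg sp2mk hbandMap)⟩

theorem moebiusToSP2_injective : Injective moebiusToSP2 := by
  intro x y h
  induction x using Quot.ind with | _ p => ?_
  induction y using Quot.ind with | _ q => ?_
  obtain ⟨s, t⟩ := p
  obtain ⟨s', t'⟩ := q
  wlog hss : (s' : ℝ) ≤ s generalizing s t s' t'
  · exact (this s' t' s t h.symm (le_of_not_ge hss)).symm
  have hv := congrArg (SP2.vieta _) h
  simp only [moebiusToSP2_mk, vieta_sp2mk_bandMap, Prod.ext_iff] at hv
  obtain ⟨hcos, hexp⟩ := hv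
  rcases eq_or_eq_one_and_eq_zero_of_exp_two_pi_eq hss hexp with rfl | ⟨rfl, rfl⟩
  · have hcos' : 2 * Real.cos (π * t) = 2 * Real.cos (π * t') := by
      exact_mod_cast mul_right_cancel₀ (Complex.exp_ne_zero _) hcos
    rw [injective_cos_pi_mul (by simpa using hcos' : Real.cos (π * t) = Real.cos (π * t'))]
  · simp only [Icc.coe_one, Icc.coe_zero, mul_one, mul_zero, Complex.ofReal_zero, zero_mul,
      Complex.exp_zero, Complex.exp_pi_mul_I, mul_neg_one, ← Complex.ofReal_neg] at hcos
    have hcos' := Complex.ofReal_injective hcos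
    have ht : t' = σ t := injective_cos_pi_mul <| by
      simp only [coe_symm_eq, mul_one_sub, Real.cos_pi_sub]
      linarith
    exact Quot.sound (Or.inr (Or.inr ⟨rfl, rfl, ht⟩))

theorem moebiusToSP2_image_boundary :
    moebiusToSP2 '' moebiusBoundary = sp2diag (sphere (0 : ℂ) 1) := by
  apply Subset.antisymm
  · rintro _ ⟨_, ⟨p, hp | hp, rfl⟩, rfl⟩
    · exact ⟨expPi p.1, by rw [moebiusToSP2_mk, hp, Icc.coe_zero, bandMap_zero]⟩
    · exact ⟨expPi (p.1 + 1), by rw [moebiusToSP2_mk, hp, Icc.coe_one, bandMap_one]⟩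
  · rintro _ ⟨z, rfl⟩
    obtain ⟨p, hp, hpz⟩ := exists_sp2mk_bandMap_eq (arg_div_pi_mem_Ioc z) 0
    refine ⟨Quot.mk _ p, ⟨p, by simpa using hp, rfl⟩, ?_⟩
    rw [moebiusToSP2_mk, hpz, Icc.coe_zero, bandMap_zero, expPi_arg_div_pi]

/-- **Morton.** The symmetric square of the circle is homeomorphic to the
compact Möbius band, by a homeomorphism carrying the image of the diagonal onto the
boundary circle. -/
theorem sp2_circle_homeomorph_moebius :
    ∃ φ : SP2 (Metric.sphere (0 : ℂ) 1) ≃ₜ Moebius,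
      φ '' sp2diag (Metric.sphere (0 : ℂ) 1) = moebiusBoundary := by
  let φ : Moebius ≃ₜ SP2 (sphere (0 : ℂ) 1) :=
    Continuous.homeoOfEquivCompactToT2 (f := Equiv.ofBijective _
      ⟨moebiusToSP2_injective, moebiusToSP2_surjective⟩) continuous_moebiusToSP2
  refine ⟨φ.symm, ?_⟩
  rw [← moebiusToSP2_image_boundary]
  exact φ.symm_image_image moebiusBoundary
end
end
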